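/- arXiv:2408.12931 — 3 statements merged into one kernel-verified Lean document; each statement's English description precedes it below -/
import Mathlib

section
/- For an alphabet Σ and a semigroup S, the set Σ_S^* of S-exponent-strings, equipped with the concatenation operation and the empty sequence λ, forms a monoid with identity λ. -/
namespace ExpStr

variable {α S : Type*}

/-- Concatenation of exponent-string representations, merging the boundary
terms when the base characters coincide. -/
def eCat [DecidableEq α] (op : S → S → S) (p q : List (α × S)) : List (α × S) :=
  match p.getLast?, q with
  | some (a, s), (b, t) :: q' =>
      if a = b then p.dropLast ++ (a, op s t) :: q' else p ++ q
  | _, _ => p ++ q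

/-- The defining property of an `S`-exponent-string:
consecutive base characters differ. -/
def IsExp (l : List (α × S)) : Prop := l.Chain' (fun x y => x.1 ≠ y.1)

/-- The exponent-string corresponding to a representation. -/
def eRep [DecidableEq α] (op : S → S → S) : List (α × S) → List (α × S)
  | [] => []
  | x :: xs => eCat op [x] (eRep op xs)

end ExpStr

namespace ExpStr

variable {α S : Type*}

theorem isExp_iff_isChain_map_fst (l : List (α × S)) :
    IsExp l ↔ (l.map Prod.fst).IsChain (· ≠ ·) := by
  rw [List.isChain_map]; rfl

theorem isExp_congr_fst {l l' : List (α × S)} (h : l.map Prod.fst = l'.map Prod.fst) :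
    IsExp l ↔ IsExp l' := by
  rw [isExp_iff_isChain_map_fst, isExp_iff_isChain_map_fst, h]

variable [DecidableEq α] (op : S → S → S)

@[simp]
theorem eCat_nil_left (q : List (α × S)) : eCat op [] q = q := by
  cases q <;> rfl

@[simp]
theorem eCat_nil_right (p : List (α × S)) : eCat op p [] = p := by
  unfold eCat
  split <;> simp_all

theorem eCat_concat_cons (l : List (α × S)) (x y : α × S) (r : List (α × S)) :
    eCat op (l ++ [x]) (y :: r) =
      if x.1 = y.1 then l ++ (x.1, op x.2 y.2) :: r else l ++ x :: y :: r := by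
  simp [eCat]

@[simp]
theorem eCat_eq_nil_iff {p q : List (α × S)} : eCat op p q = [] ↔ p = [] ∧ q = [] := by
  rcases List.eq_nil_or_concat p with rfl | ⟨l, x, rfl⟩
  · simp
  rcases q with _ | ⟨y, r⟩
  · simp
  rw [List.concat_eq_append, eCat_concat_cons]
  split_ifs <;> simp

theorem eCat_append_left {m : List (α × S)} (hm : m ≠ []) (l q : List (α × S)) :
    eCat op (l ++ m) q = l ++ eCat op m q := by
  rcases q with _ | ⟨y, r⟩
  · simp
  obtain ⟨m, x, rfl⟩ := (List.eq_nil_or_concat m).resolve_left hm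
  rw [List.concat_eq_append, ← List.append_assoc, eCat_concat_cons, eCat_concat_cons]
  split_ifs <;> simp

theorem eCat_append_right {m : List (α × S)} (hm : m ≠ []) (p r : List (α × S)) :
    eCat op p (m ++ r) = eCat op p m ++ r := by
  rcases List.eq_nil_or_concat p with rfl | ⟨l, x, rfl⟩
  · simp
  obtain ⟨y, m, rfl⟩ := List.exists_cons_of_ne_nil hm
  rw [List.concat_eq_append, List.cons_append, eCat_concat_cons, eCat_concat_cons]
  split_ifs <;> simp

theorem eCat_assoc_singletons [Std.Associative op] (x y z : α × S) :
    eCat op (eCat op [x] [y]) [z] = eCat op [x] (eCat op [y] [z]) := by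
  by_cases hxy : x.1 = y.1 <;> by_cases hyz : y.1 = z.1 <;>
    simp_all [eCat, Std.Associative.assoc]

theorem eCat_assoc_singleton_ends [Std.Associative op] (x z : α × S) (q : List (α × S)) :
    eCat op (eCat op [x] q) [z] = eCat op [x] (eCat op q [z]) := by
  rcases q with _ | ⟨y, q⟩
  · simp
  rcases eq_or_ne q [] with rfl | hq
  · exact eCat_assoc_singletons op x y z
  rw [← List.singleton_append (l := q), eCat_append_right op (List.cons_ne_nil y []),
    eCat_append_left op hq, eCat_append_left op hq,
    eCat_append_right op (List.cons_ne_nil y [])]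

/-- `eCat` only touches the last term of its left and the first term of its right argument, so
everything but the last term of `p` and the first term of `r` splits off. -/
theorem eCat_assoc [Std.Associative op] (p q r : List (α × S)) :
    eCat op (eCat op p q) r = eCat op p (eCat op q r) := by
  rcases List.eq_nil_or_concat p with rfl | ⟨p, x, rfl⟩
  · simp
  rcases r with _ | ⟨z, r⟩
  · simp
  have hx : [x] ≠ [] := List.cons_ne_nil x []
  have hz : [z] ≠ [] := List.cons_ne_nil z []
  rw [List.concat_eq_append, ← List.singleton_append (l := r),
    eCat_append_left op hx, eCat_append_left op (by simp), eCat_append_right op hz,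
    eCat_append_right op hz, eCat_append_left op hx, eCat_append_right op (by simp),
    eCat_assoc_singleton_ends]

theorem IsExp.eCat {p q : List (α × S)} (hp : IsExp p) (hq : IsExp q) :
    IsExp (eCat op p q) := by
  rcases List.eq_nil_or_concat p with rfl | ⟨l, x, rfl⟩
  · simpa using hq
  rcases q with _ | ⟨y, r⟩
  · simpa using hp
  rw [List.concat_eq_append] at hp ⊢
  rw [eCat_concat_cons]
  split_ifs with hxy
  · rw [isExp_congr_fst (l' := l ++ x :: r) (by simp)]
    exact List.isChain_split.mpr ⟨hp, (isExp_congr_fst (by simp [hxy])).mpr hq⟩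
  · exact List.isChain_append_cons_cons.mpr ⟨hp, hxy, hq⟩

end ExpStr

open ExpStr in
/-- `(Σ_S^*, ·)` is a monoid with identity `λ`: concatenation of
`S`-exponent-strings is again an `S`-exponent-string, concatenation is
associative on exponent-strings, and the empty exponent-string is a two-sided
identity. -/
theorem expString_monoid {α S : Type*} [DecidableEq α] [Semigroup S] :
    (∀ p q : List (α × S), IsExp p → IsExp q → IsExp (eCat (· * ·) p q)) ∧
    (∀ p q r : List (α × S), IsExp p → IsExp q → IsExp r →
      eCat (· * ·) (eCat (· * ·) p q) r = eCat (· * ·) p (eCat (· * ·) q r)) ∧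
    (∀ p : List (α × S),
      eCat (· * ·) ([] : List (α × S)) p = p ∧ eCat (· * ·) p [] = p) :=
  ⟨fun _ _ hp hq => hp.eCat _ hq,
    fun p q r _ _ _ => eCat_assoc _ p q r,
    fun p => ⟨eCat_nil_left _ p, eCat_nil_right _ p⟩⟩
end

section
/- For ℝ⁺-exponent-strings p₁ and p₂, there exists an exp-matching E from p₁ to p₂ whose cost equals the infimum over all exp-matchings of the cost; that is, the infimum defining the exp-edit distance is attained as a minimum. -/
noncomputable section
namespace ExpStr
open MeasureTheory

variable {α : Type*}

/-- Length of an `ℝ⁺`-exponent-string: the sum of its exponents. -/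
def eLen (l : List (α × ℝ)) : ℝ := (l.map Prod.snd).sum

/-- `ℝ⁺`-exponent-strings: consecutive base characters differ and all
exponents are positive reals. -/
def RES (l : List (α × ℝ)) : Prop := IsExp l ∧ ∀ x ∈ l, 0 < x.2

/-- Concatenation of `ℝ⁺`-exponent-strings (exponents added at the boundary). -/
def rcat [DecidableEq α] (p q : List (α × ℝ)) : List (α × ℝ) :=
  eCat (· + ·) p q

/-- The `ℕ`-exponent-string (run-length encoding) corresponding to a word. -/
def ofWord [DecidableEq α] (w : List α) : List (α × ℝ) :=
  eRep (· + ·) (w.map fun a => (a, (1 : ℝ)))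

/-- Multiply every exponent by `k`. -/
def scaleE (k : ℝ) (l : List (α × ℝ)) : List (α × ℝ) :=
  l.map fun x => (x.1, k * x.2)

/-- The base character of the position `x` in an `ℝ⁺`-exponent-string. -/
def charAt [Inhabited α] : List (α × ℝ) → ℝ → α
  | [], _ => default
  | (a, s) :: t, x => if x < s then a else charAt t (x - s)

/-- A single exp-edit operation applied to an infix, with its cost:
insertion `λ → a^q`, deletion `a^q → λ`, or substitution `a^q → b^q`. -/
def Step [DecidableEq α] (wdel wins : α → ℝ) (wsub : α → α → ℝ)
    (u v : List (α × ℝ)) (c : ℝ) : Prop :=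
  ∃ p₁ p₂ : List (α × ℝ), RES p₁ ∧ RES p₂ ∧
    ((∃ a q, 0 < q ∧ u = rcat p₁ p₂ ∧ v = rcat p₁ (rcat [(a, q)] p₂) ∧
        c = q * wins a) ∨
     (∃ a q, 0 < q ∧ u = rcat p₁ (rcat [(a, q)] p₂) ∧ v = rcat p₁ p₂ ∧
        c = q * wdel a) ∨
     (∃ a b q, 0 < q ∧ u = rcat p₁ (rcat [(a, q)] p₂) ∧
        v = rcat p₁ (rcat [(b, q)] p₂) ∧ c = q * wsub a b))

/-- `EditCost wdel wins wsub u v c` holds iff there is a finite exp-edit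
sequence from `u` to `v` of total cost `c`. -/
inductive EditCost [DecidableEq α] (wdel wins : α → ℝ) (wsub : α → α → ℝ)
    (u : List (α × ℝ)) : List (α × ℝ) → ℝ → Prop
  | refl : EditCost wdel wins wsub u u 0
  | step {p q : List (α × ℝ)} {c c' : ℝ} :
      EditCost wdel wins wsub u p c → Step wdel wins wsub p q c' →
      EditCost wdel wins wsub u q (c + c')

/-- Exp-edit distance: the infimum cost of exp-edit sequences. -/
def eDist [DecidableEq α] (wdel wins : α → ℝ) (wsub : α → α → ℝ)
    (u v : List (α × ℝ)) : ℝ :=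
  sInf {c | EditCost wdel wins wsub u v c}

/-- Exp-edit sequences all of whose intermediate terms satisfy `P`. -/
inductive EditCostIn [DecidableEq α] (P : List (α × ℝ) → Prop)
    (wdel wins : α → ℝ) (wsub : α → α → ℝ)
    (u : List (α × ℝ)) : List (α × ℝ) → ℝ → Prop
  | refl : EditCostIn P wdel wins wsub u u 0
  | step {p q : List (α × ℝ)} {c c' : ℝ} :
      EditCostIn P wdel wins wsub u p c → Step wdel wins wsub p q c' → P q →
      EditCostIn P wdel wins wsub u q (c + c')

/-- All exponents are positive integers. -/
def IntExp (l : List (α × ℝ)) : Prop := ∀ x ∈ l, ∃ n : ℕ, x.2 = n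

/-- All exponents are (positive) rationals. -/
def RatExp (l : List (α × ℝ)) : Prop := ∀ x ∈ l, ∃ r : ℚ, x.2 = r

/-- A single classical string edit operation with its cost. -/
def SStep (wdel wins : α → ℝ) (wsub : α → α → ℝ) (u v : List α) (c : ℝ) : Prop :=
  ∃ p₁ p₂ : List α,
    ((∃ a, u = p₁ ++ p₂ ∧ v = p₁ ++ a :: p₂ ∧ c = wins a) ∨
     (∃ a, u = p₁ ++ a :: p₂ ∧ v = p₁ ++ p₂ ∧ c = wdel a) ∨
     (∃ a b, u = p₁ ++ a :: p₂ ∧ v = p₁ ++ b :: p₂ ∧ c = wsub a b))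

/-- Total costs of classical string edit sequences. -/
inductive SEditCost (wdel wins : α → ℝ) (wsub : α → α → ℝ) (u : List α) :
    List α → ℝ → Prop
  | refl : SEditCost wdel wins wsub u u 0
  | step {p q : List α} {c c' : ℝ} :
      SEditCost wdel wins wsub u p c → SStep wdel wins wsub p q c' →
      SEditCost wdel wins wsub u q (c + c')

/-- Classical string edit distance. -/
def sDist (wdel wins : α → ℝ) (wsub : α → α → ℝ) (u v : List α) : ℝ :=
  sInf {c | SEditCost wdel wins wsub u v c}

/-- X-projection of a diagonal segment `(x₀, y₀, t)`. -/
def mSegX (m : ℝ × ℝ × ℝ) : Set ℝ := Set.Ico m.1 (m.1 + m.2.2)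

/-- Y-projection of a diagonal segment `(x₀, y₀, t)`. -/
def mSegY (m : ℝ × ℝ × ℝ) : Set ℝ := Set.Ico m.2.1 (m.2.1 + m.2.2)

/-- X-projection of a matching. -/
def mEX (M : List (ℝ × ℝ × ℝ)) : Set ℝ := ⋃ m ∈ M, mSegX m

/-- Y-projection of a matching. -/
def mEY (M : List (ℝ × ℝ × ℝ)) : Set ℝ := ⋃ m ∈ M, mSegY m

/-- An exp-matching: a finite family of diagonal segments, each given as
`(x₀, y₀, t)` (start point and length parameter), lying in `[0,L₁)×[0,L₂)`,
with pairwise disjoint axis projections, and monotone. -/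
def IsMatching (L₁ L₂ : ℝ) (M : List (ℝ × ℝ × ℝ)) : Prop :=
  (∀ m ∈ M, 0 < m.2.2 ∧ 0 ≤ m.1 ∧ 0 ≤ m.2.1 ∧
      m.1 + m.2.2 ≤ L₁ ∧ m.2.1 + m.2.2 ≤ L₂) ∧
  M.Pairwise (fun m m' =>
      Disjoint (mSegX m) (mSegX m') ∧ Disjoint (mSegY m) (mSegY m')) ∧
  (∀ m ∈ M, ∀ m' ∈ M, ∀ s s' : ℝ, 0 ≤ s → s < m.2.2 → 0 ≤ s' → s' < m'.2.2 →
      m.1 + s < m'.1 + s' → m.2.1 + s ≤ m'.2.1 + s')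

/-- Cost of an exp-matching: deletion and insertion integrals over the
unmatched positions plus the substitution (arc-length) integral over the
segments (the factor `1/√2` cancels the speed `√2` of the parametrization). -/
def mCost [Inhabited α] (wdel wins : α → ℝ) (wsub : α → α → ℝ)
    (p₁ p₂ : List (α × ℝ)) (M : List (ℝ × ℝ × ℝ)) : ℝ :=
  (∫ x in Set.Ico 0 (eLen p₁) \ mEX M, wdel (charAt p₁ x)) +
  (∫ y in Set.Ico 0 (eLen p₂) \ mEY M, wins (charAt p₂ y)) +
  (M.map fun m => ∫ s in (0 : ℝ)..m.2.2,
      wsub (charAt p₁ (m.1 + s)) (charAt p₂ (m.2.1 + s))).sum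

end ExpStr
end

/-!
Cut `[0, L₁)` and `[0, L₂)` into the runs (blocks) of `p₁` and `p₂`. On a cell
`block i × block j` both characters are constant, so the cost of a matching depends only on
the total diagonal length `t (i, j)` it places in each cell, and is an affine function of `t`.
These arrays are plans: nonnegative, with row and column sums bounded by the run lengths,
and with support a chain for the product order, since monotonicity forbids using two cells
one of which lies strictly to the lower right of the other. Conversely every plan is realised
by filling each used cell with one segment, placed after those of the earlier cells of its
row and of its column. Plans form a compact set on which the cost is continuous, so a
cheapest plan exists, and the matching realising it is a cheapest matching.
-/

theorem List.sum_map_sum {β ι M : Type*} [Fintype ι] [AddCommMonoid M] (l : List β)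
    (f : β → ι → M) :
    (l.map fun b => ∑ i, f b i).sum = ∑ i, (l.map (f · i)).sum := by
  simpa using Multiset.sum_map_sum (m := (l : Multiset β)) (s := Finset.univ) (f := f)

noncomputable section

namespace ExpStr

open MeasureTheory Set Function

variable {α : Type*}

lemma sum_Iio_add_le_sum_Iio {ι M : Type*} [LinearOrder ι] [LocallyFiniteOrderBot ι]
    [AddCommMonoid M] [PartialOrder M] [IsOrderedAddMonoid M] {f : ι → M} (hf : ∀ i, 0 ≤ f i)
    {a b : ι} (h : a < b) : ∑ i ∈ Finset.Iio a, f i + f a ≤ ∑ i ∈ Finset.Iio b, f i := by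
  rw [Finset.sum_Iio_add_eq_sum_Iic]
  exact Finset.sum_le_sum_of_subset_of_nonneg
    (fun i hi => Finset.mem_Iio.2 ((Finset.mem_Iic.1 hi).trans_lt h)) fun i _ _ => hf i

lemma sum_Iio_add_le_sum {ι M : Type*} [Fintype ι] [LinearOrder ι] [LocallyFiniteOrderBot ι]
    [AddCommMonoid M] [PartialOrder M] [IsOrderedAddMonoid M] {f : ι → M} (hf : ∀ i, 0 ≤ f i)
    (a : ι) : ∑ i ∈ Finset.Iio a, f i + f a ≤ ∑ i, f i := by
  rw [Finset.sum_Iio_add_eq_sum_Iic]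
  exact Finset.sum_le_sum_of_subset_of_nonneg (Finset.subset_univ _) fun i _ _ => hf i

section PiecewiseConstant

variable {X ι : Type*} [MeasurableSpace X] {μ : Measure X} [Fintype ι] {P : ι → Set X}
  {A : Set X}

lemma measureReal_eq_sum_inter (hPm : ∀ i, MeasurableSet (P i))
    (hPd : Pairwise (Disjoint on P)) (hAm : MeasurableSet A) (hA : μ A ≠ ⊤)
    (hcov : A ⊆ ⋃ i, P i) :
    μ.real A = ∑ i, μ.real (A ∩ P i) := by
  conv_lhs => rw [← inter_eq_left.2 hcov, inter_iUnion]
  exact measureReal_iUnion_fintype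
    (fun i j h => (hPd h).mono inter_subset_right inter_subset_right)
    (fun i => hAm.inter (hPm i)) (fun i => measure_ne_top_of_subset inter_subset_left hA)

lemma setIntegral_eq_sum_of_eqOn (hPm : ∀ i, MeasurableSet (P i))
    (hPd : Pairwise (Disjoint on P)) (hAm : MeasurableSet A) (hA : μ A ≠ ⊤)
    (hcov : A ⊆ ⋃ i, P i) {f : X → ℝ} {c : ι → ℝ} (hc : ∀ i, EqOn f (fun _ => c i) (A ∩ P i)) :
    ∫ x in A, f x ∂μ = ∑ i, c i * μ.real (A ∩ P i) := by
  have hm : ∀ i, MeasurableSet (A ∩ P i) := fun i => hAm.inter (hPm i)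
  have hfin : ∀ i, μ (A ∩ P i) ≠ ⊤ := fun i => measure_ne_top_of_subset inter_subset_left hA
  conv_lhs => rw [← inter_eq_left.2 hcov, inter_iUnion]
  rw [integral_iUnion_fintype hm
    (fun i j h => (hPd h).mono inter_subset_right inter_subset_right)
    (fun i => (integrableOn_const (hfin i)).congr_fun (hc i).symm (hm i))]
  refine Finset.sum_congr rfl fun i _ => ?_
  rw [setIntegral_congr_fun (hm i) (hc i), setIntegral_const, smul_eq_mul, mul_comm]

lemma measureReal_inter_biUnion_list {β : Type*} {B : Set X} (hBm : MeasurableSet B)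
    (hB : μ B ≠ ⊤) {S : β → Set X} (hS : ∀ b, MeasurableSet (S b)) {l : List β}
    (hl : l.Pairwise (Disjoint on S)) :
    μ.real (B ∩ ⋃ b ∈ l, S b) = (l.map fun b => μ.real (B ∩ S b)).sum := by
  induction l with
  | nil => simp
  | cons b l ih =>
    rw [List.pairwise_cons] at hl
    have hdisj : Disjoint (B ∩ S b) (B ∩ ⋃ b' ∈ l, S b') :=
      (disjoint_iUnion₂_right.2 hl.1).mono inter_subset_right inter_subset_right
    have hm : MeasurableSet (B ∩ ⋃ b' ∈ l, S b') :=
      hBm.inter (l.finite_toSet.measurableSet_biUnion fun b' _ => hS b')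
    simp only [List.mem_cons, iUnion_iUnion_eq_or_left]
    rw [List.map_cons, List.sum_cons, ← ih hl.2, inter_union_distrib_left,
      measureReal_union hdisj hm (measure_ne_top_of_subset inter_subset_left hB)
        (measure_ne_top_of_subset inter_subset_left hB)]

end PiecewiseConstant

lemma volume_real_Ico_inter_preimage_add (x₀ t : ℝ) (B : Set ℝ) :
    volume.real (Ico 0 t ∩ (x₀ + ·) ⁻¹' B) = volume.real (B ∩ Ico x₀ (x₀ + t)) := by
  have h : Ico 0 t ∩ (x₀ + ·) ⁻¹' B = (x₀ + ·) ⁻¹' (B ∩ Ico x₀ (x₀ + t)) := by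
    ext s
    simp only [mem_inter_iff, mem_preimage, mem_Ico]
    constructor
    · rintro ⟨⟨h₁, h₂⟩, h₃⟩
      exact ⟨h₃, by linarith, by linarith⟩
    · rintro ⟨h₃, h₁, h₂⟩
      exact ⟨⟨by linarith, by linarith⟩, h₃⟩
  rw [h, Measure.real, measure_preimage_add, Measure.real]

section Blocks

variable (p : List (α × ℝ))

def pref (i : ℕ) : ℝ := eLen (p.take i)

def block (i : ℕ) : Set ℝ := Ico (pref p i) (pref p (i + 1))

@[simp] lemma pref_zero : pref p 0 = 0 := by simp [pref, eLen]

lemma pref_length : pref p p.length = eLen p := by simp [pref]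

lemma pref_succ (i : Fin p.length) : pref p (i + 1) = pref p i + (p.get i).2 := by
  rw [pref, pref, List.take_add_one, List.getElem?_eq_getElem i.2]
  simp [eLen]

lemma pref_cons_succ (a : α × ℝ) (i : ℕ) : pref (a :: p) (i + 1) = a.2 + pref p i := by
  simp [pref, eLen]

lemma measurableSet_preimage_block (x₀ : ℝ) (i : ℕ) :
    MeasurableSet ((x₀ + ·) ⁻¹' block p i) :=
  measurableSet_Ico.preimage (measurable_const_add x₀)

variable {p} (hp : ∀ x ∈ p, 0 ≤ x.2)
include hp

lemma pref_mono : Monotone (pref p) := by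
  refine monotone_nat_of_le_succ fun i => ?_
  by_cases hi : i < p.length
  · simpa [pref_succ p ⟨i, hi⟩] using hp _ (List.get_mem p ⟨i, hi⟩)
  · simp [pref, List.take_of_length_le (not_lt.1 hi),
      List.take_of_length_le (Nat.le_succ_of_le (not_lt.1 hi))]

lemma pref_nonneg (i : ℕ) : 0 ≤ pref p i := by
  simpa using pref_mono hp (Nat.zero_le i)

lemma block_subset_Ico (i : Fin p.length) : block p i ⊆ Ico 0 (eLen p) := by
  rw [← pref_length]
  exact Ico_subset_Ico (pref_nonneg hp i) (pref_mono hp i.2)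

lemma pairwise_disjoint_block : Pairwise (Disjoint on block p) :=
  (pref_mono hp).pairwise_disjoint_on_Ico_succ

lemma charAt_of_mem_block [Inhabited α] {i : Fin p.length} {x : ℝ} (hx : x ∈ block p i) :
    charAt p x = (p.get i).1 := by
  induction p generalizing x with
  | nil => exact i.elim0
  | cons a p ih =>
    obtain ⟨i, hi⟩ := i
    cases i with
    | zero => simp_all [block, pref_cons_succ, charAt]
    | succ i =>
      have hp' : ∀ x ∈ p, 0 ≤ x.2 := fun x hx => hp x (List.mem_cons_of_mem _ hx)
      simp only [block, pref_cons_succ, mem_Ico] at hx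
      have hx' : x - a.2 ∈ block p i := ⟨by linarith, by linarith⟩
      have ha : ¬ x < a.2 := by linarith [pref_nonneg hp' i]
      simpa [charAt, ha] using ih hp' (i := ⟨i, by simpa using hi⟩) hx'

lemma exists_mem_block {x : ℝ} (hx : x ∈ Ico 0 (eLen p)) :
    ∃ i : Fin p.length, x ∈ block p i := by
  induction p generalizing x with
  | nil => simp [eLen] at hx
  | cons a p ih =>
    by_cases hxa : x < a.2
    · exact ⟨⟨0, by simp⟩, by simpa [block, pref_cons_succ] using ⟨hx.1, hxa⟩⟩
    · have hp' : ∀ x ∈ p, 0 ≤ x.2 := fun x hx => hp x (List.mem_cons_of_mem _ hx)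
      have hx' : x - a.2 ∈ Ico 0 (eLen p) := by
        simp only [eLen, List.map_cons, List.sum_cons, mem_Ico] at hx ⊢
        constructor <;> linarith
      obtain ⟨i, hi⟩ := ih hp' hx'
      refine ⟨⟨i + 1, by simp⟩, ?_⟩
      simp only [block, pref_cons_succ, mem_Ico] at hi ⊢
      constructor <;> linarith [hi.1, hi.2]

lemma lt_of_mem_block_of_lt {i i' : ℕ} (h : i < i') {x x' : ℝ} (hx : x ∈ block p i)
    (hx' : x' ∈ block p i') : x < x' :=
  hx.2.trans_le ((pref_mono hp h).trans hx'.1)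

lemma eq_of_mem_block {i k : ℕ} {x : ℝ} (hi : x ∈ block p i) (hk : x ∈ block p k) : i = k := by
  by_contra hne
  exact (pairwise_disjoint_block hp hne).le_bot ⟨hi, hk⟩

lemma volume_real_block (i : Fin p.length) : volume.real (block p i) = (p.get i).2 := by
  rw [block, Real.volume_real_Ico_of_le (pref_mono hp (Nat.le_succ _)), pref_succ]
  ring

lemma setIntegral_charAt_diff [Inhabited α] (f : α → ℝ) {E : Set ℝ} (hE : MeasurableSet E) :
    ∫ x in Ico 0 (eLen p) \ E, f (charAt p x) =
      ∑ i, f (p.get i).1 * ((p.get i).2 - volume.real (block p i ∩ E)) := by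
  rw [setIntegral_eq_sum_of_eqOn (P := fun i : Fin p.length => block p i)
    (fun _ => measurableSet_Ico) ((pairwise_disjoint_block hp).comp_of_injective Fin.val_injective)
    (measurableSet_Ico.diff hE) (measure_ne_top_of_subset sdiff_subset measure_Ico_lt_top.ne)
    (fun x hx => mem_iUnion.2 (exists_mem_block hp hx.1))
    (c := fun i => f (p.get i).1) (fun i x hx => congrArg f (charAt_of_mem_block hp hx.2))]
  refine Finset.sum_congr rfl fun i _ => ?_
  have hdiff : (Ico 0 (eLen p) \ E) ∩ block p i = block p i \ E := by
    rw [inter_comm, ← inter_sdiff_assoc, inter_eq_left.2 (block_subset_Ico hp i)]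
  rw [hdiff, ← volume_real_block hp i,
    ← measureReal_sdiff_add_inter (s := block p i) hE measure_Ico_lt_top.ne]
  ring

lemma Ico_subset_iUnion_preimage_block {x₀ t : ℝ} (h : Ico x₀ (x₀ + t) ⊆ Ico 0 (eLen p)) :
    Ico 0 t ⊆ ⋃ i : Fin p.length, (x₀ + ·) ⁻¹' block p i := fun s hs =>
  mem_iUnion.2 (exists_mem_block hp (h ⟨by linarith [hs.1], by linarith [hs.2]⟩))

lemma pairwise_disjoint_preimage_block (x₀ : ℝ) :
    Pairwise (Disjoint on fun i : Fin p.length => (x₀ + ·) ⁻¹' block p i) :=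
  fun _ _ h => ((pairwise_disjoint_block hp) (Fin.val_injective.ne h)).preimage _

end Blocks

section Matchings

lemma IsMatching.mSegX_subset {L₁ L₂ : ℝ} {M : List (ℝ × ℝ × ℝ)} (hM : IsMatching L₁ L₂ M)
    {m : ℝ × ℝ × ℝ} (hm : m ∈ M) : mSegX m ⊆ Ico 0 L₁ :=
  Ico_subset_Ico (hM.1 m hm).2.1 (hM.1 m hm).2.2.2.1

lemma IsMatching.mSegY_subset {L₁ L₂ : ℝ} {M : List (ℝ × ℝ × ℝ)} (hM : IsMatching L₁ L₂ M)
    {m : ℝ × ℝ × ℝ} (hm : m ∈ M) : mSegY m ⊆ Ico 0 L₂ :=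
  Ico_subset_Ico (hM.1 m hm).2.2.1 (hM.1 m hm).2.2.2.2

lemma measurableSet_mEX (M : List (ℝ × ℝ × ℝ)) : MeasurableSet (mEX M) :=
  M.finite_toSet.measurableSet_biUnion fun _ _ => measurableSet_Ico

lemma measurableSet_mEY (M : List (ℝ × ℝ × ℝ)) : MeasurableSet (mEY M) :=
  M.finite_toSet.measurableSet_biUnion fun _ _ => measurableSet_Ico

def Precedes (m m' : ℝ × ℝ × ℝ) : Prop := m.1 + m.2.2 ≤ m'.1 ∧ m.2.1 + m.2.2 ≤ m'.2.1

lemma isMatching_of_pairwise {L₁ L₂ : ℝ} {M : List (ℝ × ℝ × ℝ)} (hpos : ∀ m ∈ M, 0 < m.2.2)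
    (hX : ∀ m ∈ M, mSegX m ⊆ Ico 0 L₁) (hY : ∀ m ∈ M, mSegY m ⊆ Ico 0 L₂)
    (hM : M.Pairwise fun m m' => Precedes m m' ∨ Precedes m' m) : IsMatching L₁ L₂ M := by
  refine ⟨fun m hm => ?_, hM.imp ?_, ?_⟩
  · have hm₀ := hpos m hm
    obtain ⟨hx₀, hx₁⟩ := (Ico_subset_Ico_iff (by linarith)).1 (hX m hm)
    obtain ⟨hy₀, hy₁⟩ := (Ico_subset_Ico_iff (by linarith)).1 (hY m hm)
    exact ⟨hm₀, hx₀, hy₀, hx₁, hy₁⟩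
  · rintro m m' (h | h)
    · exact ⟨Ico_disjoint_Ico_same.mono_right (Ico_subset_Ico_left h.1),
        Ico_disjoint_Ico_same.mono_right (Ico_subset_Ico_left h.2)⟩
    · exact ⟨(Ico_disjoint_Ico_same.mono_right (Ico_subset_Ico_left h.1)).symm,
        (Ico_disjoint_Ico_same.mono_right (Ico_subset_Ico_left h.2)).symm⟩
  · have : Std.Symm fun m m' => Precedes m m' ∨ Precedes m' m := ⟨fun _ _ => Or.symm⟩
    intro m hm m' hm' s s' hs₀ hs hs₀' hs' hlt
    by_cases heq : m = m'
    · subst heq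
      linarith
    rcases hM.forall hm hm' heq with h | h
    · linarith [h.2]
    · linarith [h.1]

end Matchings

section Plan

variable (p₁ p₂ : List (α × ℝ))

structure IsPlan (t : Fin p₁.length × Fin p₂.length → ℝ) : Prop where
  nonneg : ∀ ij, 0 ≤ t ij
  sum_row_le : ∀ i, ∑ j, t (i, j) ≤ (p₁.get i).2
  sum_col_le : ∀ j, ∑ i, t (i, j) ≤ (p₂.get j).2
  noncrossing : ∀ i i' j j', i < i' → j' < j → t (i, j) = 0 ∨ t (i', j') = 0

def planCost (wdel wins : α → ℝ) (wsub : α → α → ℝ) (t : Fin p₁.length × Fin p₂.length → ℝ) :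
    ℝ :=
  (∑ i, wdel (p₁.get i).1 * ((p₁.get i).2 - ∑ j, t (i, j))) +
  (∑ j, wins (p₂.get j).1 * ((p₂.get j).2 - ∑ i, t (i, j))) +
  ∑ ij, t ij * wsub (p₁.get ij.1).1 (p₂.get ij.2).1

lemma isCompact_setOf_isPlan : IsCompact {t | IsPlan p₁ p₂ t} := by
  have hclosed : IsClosed {t | IsPlan p₁ p₂ t} := by
    have h : {t | IsPlan p₁ p₂ t} = {t | (∀ ij, 0 ≤ t ij) ∧ (∀ i, ∑ j, t (i, j) ≤ (p₁.get i).2) ∧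
        (∀ j, ∑ i, t (i, j) ≤ (p₂.get j).2) ∧
        ∀ i i' j j', i < i' → j' < j → t (i, j) = 0 ∨ t (i', j') = 0} := by
      ext t
      exact ⟨fun ⟨h₁, h₂, h₃, h₄⟩ => ⟨h₁, h₂, h₃, h₄⟩, fun ⟨h₁, h₂, h₃, h₄⟩ => ⟨h₁, h₂, h₃, h₄⟩⟩
    simp only [h, ofPred_and, ofPred_forall, ofPred_or]
    refine .inter (isClosed_iInter fun ij => isClosed_le (by fun_prop) (by fun_prop))
      (.inter (isClosed_iInter fun i => isClosed_le (by fun_prop) (by fun_prop))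
      (.inter (isClosed_iInter fun j => isClosed_le (by fun_prop) (by fun_prop))
      (isClosed_iInter fun i => isClosed_iInter fun i' => isClosed_iInter fun j =>
        isClosed_iInter fun j' => isClosed_iInter fun _ => isClosed_iInter fun _ =>
          .union (isClosed_eq (by fun_prop) (by fun_prop))
            (isClosed_eq (by fun_prop) (by fun_prop)))))
  refine isCompact_Icc.of_isClosed_subset hclosed fun t ht =>
    ⟨ht.nonneg, fun ij => le_trans ?_ (ht.sum_row_le ij.1)⟩
  exact Finset.single_le_sum (f := fun j => t (ij.1, j)) (fun j _ => ht.nonneg _)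
    (Finset.mem_univ ij.2)

lemma exists_isPlan_isMinOn (hp₁ : ∀ x ∈ p₁, 0 ≤ x.2) (hp₂ : ∀ x ∈ p₂, 0 ≤ x.2)
    (wdel wins : α → ℝ) (wsub : α → α → ℝ) :
    ∃ t, IsPlan p₁ p₂ t ∧ IsMinOn (planCost p₁ p₂ wdel wins wsub) {t | IsPlan p₁ p₂ t} t := by
  have hzero : IsPlan p₁ p₂ 0 :=
    ⟨fun _ => le_rfl, fun i => by simpa using hp₁ _ (List.get_mem _ i),
      fun j => by simpa using hp₂ _ (List.get_mem _ j), fun _ _ _ _ _ _ => Or.inl rfl⟩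
  exact (isCompact_setOf_isPlan p₁ p₂).exists_isMinOn ⟨0, hzero⟩
    (by unfold planCost; fun_prop)

variable {p₁ p₂} in
lemma IsPlan.le_or_le_of_pos {t : Fin p₁.length × Fin p₂.length → ℝ} (ht : IsPlan p₁ p₂ t)
    {ij kl : Fin p₁.length × Fin p₂.length} (hij : 0 < t ij) (hkl : 0 < t kl) :
    ij ≤ kl ∨ kl ≤ ij := by
  obtain ⟨i, j⟩ := ij
  obtain ⟨k, l⟩ := kl
  have h₁ : ¬ (i < k ∧ l < j) := fun h => (ht.noncrossing i k j l h.1 h.2).elim hij.ne' hkl.ne'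
  have h₂ : ¬ (k < i ∧ j < l) := fun h => (ht.noncrossing k i l j h.1 h.2).elim hkl.ne' hij.ne'
  simp only [Prod.mk_le_mk, Fin.le_def, Fin.lt_def] at h₁ h₂ ⊢
  omega

end Plan

section PlanOfMatching

variable (p₁ p₂ : List (α × ℝ))

def cell (m : ℝ × ℝ × ℝ) (ij : Fin p₁.length × Fin p₂.length) : Set ℝ :=
  Ico 0 m.2.2 ∩ (m.1 + ·) ⁻¹' block p₁ ij.1 ∩ (m.2.1 + ·) ⁻¹' block p₂ ij.2

def planOf (M : List (ℝ × ℝ × ℝ)) (ij : Fin p₁.length × Fin p₂.length) : ℝ :=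
  (M.map fun m => volume.real (cell p₁ p₂ m ij)).sum

variable {p₁ p₂} (hp₁ : ∀ x ∈ p₁, 0 ≤ x.2) (hp₂ : ∀ x ∈ p₂, 0 ≤ x.2) {m : ℝ × ℝ × ℝ}
  {M : List (ℝ × ℝ × ℝ)}

include hp₂ in
lemma sum_volume_real_cell_row (hy : mSegY m ⊆ Ico 0 (eLen p₂)) (i : Fin p₁.length) :
    ∑ j, volume.real (cell p₁ p₂ m (i, j)) = volume.real (block p₁ i ∩ mSegX m) := by
  rw [mSegX, ← volume_real_Ico_inter_preimage_add]
  exact (measureReal_eq_sum_inter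
    (fun j : Fin p₂.length => measurableSet_preimage_block p₂ m.2.1 j)
    (pairwise_disjoint_preimage_block hp₂ m.2.1)
    (measurableSet_Ico.inter (measurableSet_preimage_block p₁ m.1 i))
    (measure_ne_top_of_subset inter_subset_left measure_Ico_lt_top.ne)
    (inter_subset_left.trans (Ico_subset_iUnion_preimage_block hp₂ hy))).symm

include hp₁ in
lemma sum_volume_real_cell_col (hx : mSegX m ⊆ Ico 0 (eLen p₁)) (j : Fin p₂.length) :
    ∑ i, volume.real (cell p₁ p₂ m (i, j)) = volume.real (block p₂ j ∩ mSegY m) := by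
  rw [mSegY, ← volume_real_Ico_inter_preimage_add]
  simp only [cell, inter_right_comm _ ((m.1 + ·) ⁻¹' _)]
  exact (measureReal_eq_sum_inter
    (fun i : Fin p₁.length => measurableSet_preimage_block p₁ m.1 i)
    (pairwise_disjoint_preimage_block hp₁ m.1)
    (measurableSet_Ico.inter (measurableSet_preimage_block p₂ m.2.1 j))
    (measure_ne_top_of_subset inter_subset_left measure_Ico_lt_top.ne)
    (inter_subset_left.trans (Ico_subset_iUnion_preimage_block hp₁ hx))).symm

include hp₁ hp₂ in
lemma integral_segment_eq_sum [Inhabited α] (F : α → α → ℝ) (ht : 0 ≤ m.2.2)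
    (hx : mSegX m ⊆ Ico 0 (eLen p₁)) (hy : mSegY m ⊆ Ico 0 (eLen p₂)) :
    ∫ s in (0 : ℝ)..m.2.2, F (charAt p₁ (m.1 + s)) (charAt p₂ (m.2.1 + s)) =
      ∑ ij, F (p₁.get ij.1).1 (p₂.get ij.2).1 * volume.real (cell p₁ p₂ m ij) := by
  rw [intervalIntegral.integral_of_le ht, integral_Ioc_eq_integral_Ioo,
    ← integral_Ico_eq_integral_Ioo]
  simp only [cell, inter_assoc]
  refine setIntegral_eq_sum_of_eqOn
    (P := fun ij : Fin p₁.length × Fin p₂.length =>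
      (m.1 + ·) ⁻¹' block p₁ ij.1 ∩ (m.2.1 + ·) ⁻¹' block p₂ ij.2)
    (fun ij => (measurableSet_preimage_block _ _ _).inter (measurableSet_preimage_block _ _ _))
    (fun ij kl h => ?_) measurableSet_Ico measure_Ico_lt_top.ne (fun s hs => ?_)
    (fun ij s hs => by simp only [charAt_of_mem_block hp₁ hs.2.1, charAt_of_mem_block hp₂ hs.2.2])
  · by_cases h₁ : ij.1 = kl.1
    · exact (pairwise_disjoint_preimage_block hp₂ m.2.1 fun h₂ => h (Prod.ext h₁ h₂)).mono
        inter_subset_right inter_subset_right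
    · exact (pairwise_disjoint_preimage_block hp₁ m.1 h₁).mono
        inter_subset_left inter_subset_left
  · obtain ⟨i, hi⟩ := mem_iUnion.1 (Ico_subset_iUnion_preimage_block hp₁ hx hs)
    obtain ⟨j, hj⟩ := mem_iUnion.1 (Ico_subset_iUnion_preimage_block hp₂ hy hs)
    exact mem_iUnion.2 ⟨(i, j), hi, hj⟩

lemma exists_mem_cell_of_planOf_ne_zero {ij : Fin p₁.length × Fin p₂.length}
    (h : planOf p₁ p₂ M ij ≠ 0) : ∃ m ∈ M, (cell p₁ p₂ m ij).Nonempty := by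
  contrapose! h
  refine List.sum_eq_zero fun x hx => ?_
  obtain ⟨m, hm, rfl⟩ := List.mem_map.1 hx
  simp [h m hm]

variable (hM : IsMatching (eLen p₁) (eLen p₂) M)
include hM

include hp₂ in
lemma sum_planOf_row (i : Fin p₁.length) :
    ∑ j, planOf p₁ p₂ M (i, j) = volume.real (block p₁ i ∩ mEX M) := by
  rw [mEX, measureReal_inter_biUnion_list (B := block p₁ i) measurableSet_Ico
    measure_Ico_lt_top.ne (S := mSegX) (fun _ => measurableSet_Ico) (hM.2.1.imp And.left)]
  simp only [planOf, ← List.sum_map_sum]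
  congr 1
  exact List.map_congr_left fun m hm =>
    sum_volume_real_cell_row hp₂ (hM.mSegY_subset hm) i

include hp₁ in
lemma sum_planOf_col (j : Fin p₂.length) :
    ∑ i, planOf p₁ p₂ M (i, j) = volume.real (block p₂ j ∩ mEY M) := by
  rw [mEY, measureReal_inter_biUnion_list (B := block p₂ j) measurableSet_Ico
    measure_Ico_lt_top.ne (S := mSegY) (fun _ => measurableSet_Ico) (hM.2.1.imp And.right)]
  simp only [planOf, ← List.sum_map_sum]
  congr 1
  exact List.map_congr_left fun m hm =>
    sum_volume_real_cell_col hp₁ (hM.mSegX_subset hm) j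

include hp₁ hp₂ in
lemma mCost_eq_planCost [Inhabited α] (wdel wins : α → ℝ) (wsub : α → α → ℝ) :
    mCost wdel wins wsub p₁ p₂ M = planCost p₁ p₂ wdel wins wsub (planOf p₁ p₂ M) := by
  rw [mCost, planCost, setIntegral_charAt_diff hp₁ _ (measurableSet_mEX M),
    setIntegral_charAt_diff hp₂ _ (measurableSet_mEY M)]
  simp only [sum_planOf_row hp₂ hM, sum_planOf_col hp₁ hM]
  congr 1
  rw [List.map_congr_left fun m hm => integral_segment_eq_sum hp₁ hp₂ wsub (hM.1 m hm).1.le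
    (hM.mSegX_subset hm) (hM.mSegY_subset hm), List.sum_map_sum]
  simp only [planOf, List.sum_map_mul_left, mul_comm]

include hp₁ hp₂ in
lemma isPlan_planOf : IsPlan p₁ p₂ (planOf p₁ p₂ M) where
  nonneg ij := List.sum_nonneg fun x hx => by
    obtain ⟨m, -, rfl⟩ := List.mem_map.1 hx
    exact measureReal_nonneg
  sum_row_le i := by
    rw [sum_planOf_row hp₂ hM, ← volume_real_block hp₁ i]
    exact measureReal_mono inter_subset_left measure_Ico_lt_top.ne
  sum_col_le j := by
    rw [sum_planOf_col hp₁ hM, ← volume_real_block hp₂ j]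
    exact measureReal_mono inter_subset_left measure_Ico_lt_top.ne
  noncrossing i i' j j' hi hj := by
    by_contra! h
    obtain ⟨m, hm, s, hs⟩ := exists_mem_cell_of_planOf_ne_zero h.1
    obtain ⟨m', hm', s', hs'⟩ := exists_mem_cell_of_planOf_ne_zero h.2
    have hx : m.1 + s < m'.1 + s' := lt_of_mem_block_of_lt hp₁ hi hs.1.2 hs'.1.2
    have hy : m'.2.1 + s' < m.2.1 + s := lt_of_mem_block_of_lt hp₂ hj hs'.2 hs.2
    exact (hM.2.2 m hm m' hm' s s' hs.1.1.1 hs.1.1.2 hs'.1.1.1 hs'.1.1.2 hx).not_gt hy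

end PlanOfMatching

section MatchingOfPlan

variable (p₁ p₂ : List (α × ℝ)) (t : Fin p₁.length × Fin p₂.length → ℝ)

def segment (ij : Fin p₁.length × Fin p₂.length) : ℝ × ℝ × ℝ :=
  (pref p₁ ij.1 + ∑ j ∈ Finset.Iio ij.2, t (ij.1, j),
    pref p₂ ij.2 + ∑ i ∈ Finset.Iio ij.1, t (i, ij.2), t ij)

def matchingOf : List (ℝ × ℝ × ℝ) :=
  (Finset.univ.filter fun ij => 0 < t ij).toList.map (segment p₁ p₂ t)

variable {p₁ p₂ t} (ht : IsPlan p₁ p₂ t) (i : Fin p₁.length) (j : Fin p₂.length)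
include ht

lemma pref_le_segment_fst : pref p₁ i ≤ (segment p₁ p₂ t (i, j)).1 :=
  le_add_of_nonneg_right (Finset.sum_nonneg fun _ _ => ht.nonneg _)

lemma pref_le_segment_snd : pref p₂ j ≤ (segment p₁ p₂ t (i, j)).2.1 :=
  le_add_of_nonneg_right (Finset.sum_nonneg fun _ _ => ht.nonneg _)

lemma segment_fst_add_le_pref : (segment p₁ p₂ t (i, j)).1 + t (i, j) ≤ pref p₁ (i + 1) := by
  rw [pref_succ, segment, add_assoc]
  linarith [sum_Iio_add_le_sum (fun j => ht.nonneg (i, j)) j, ht.sum_row_le i]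

lemma segment_snd_add_le_pref : (segment p₁ p₂ t (i, j)).2.1 + t (i, j) ≤ pref p₂ (j + 1) := by
  rw [pref_succ, segment, add_assoc]
  linarith [sum_Iio_add_le_sum (fun i => ht.nonneg (i, j)) i, ht.sum_col_le j]

lemma mSegX_segment_subset : mSegX (segment p₁ p₂ t (i, j)) ⊆ block p₁ i :=
  Ico_subset_Ico (pref_le_segment_fst ht i j) (segment_fst_add_le_pref ht i j)

lemma mSegY_segment_subset : mSegY (segment p₁ p₂ t (i, j)) ⊆ block p₂ j :=
  Ico_subset_Ico (pref_le_segment_snd ht i j) (segment_snd_add_le_pref ht i j)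

variable {i j}

lemma segment_fst_add_le (hp₁ : ∀ x ∈ p₁, 0 ≤ x.2) {k : Fin p₁.length} {l : Fin p₂.length}
    (h : (i, j) < (k, l)) :
    (segment p₁ p₂ t (i, j)).1 + t (i, j) ≤ (segment p₁ p₂ t (k, l)).1 := by
  rcases (Prod.mk_le_mk.1 h.le).1.lt_or_eq with hik | rfl
  · calc _ ≤ pref p₁ (i + 1) := segment_fst_add_le_pref ht i j
      _ ≤ pref p₁ k := pref_mono hp₁ hik
      _ ≤ _ := pref_le_segment_fst ht k l
  · have hjl : j < l := by simpa using h
    simp only [segment]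
    linarith [sum_Iio_add_le_sum_Iio (fun j => ht.nonneg (i, j)) hjl]

lemma segment_snd_add_le (hp₂ : ∀ x ∈ p₂, 0 ≤ x.2) {k : Fin p₁.length} {l : Fin p₂.length}
    (h : (i, j) < (k, l)) :
    (segment p₁ p₂ t (i, j)).2.1 + t (i, j) ≤ (segment p₁ p₂ t (k, l)).2.1 := by
  rcases (Prod.mk_le_mk.1 h.le).2.lt_or_eq with hjl | rfl
  · calc _ ≤ pref p₂ (j + 1) := segment_snd_add_le_pref ht i j
      _ ≤ pref p₂ l := pref_mono hp₂ hjl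
      _ ≤ _ := pref_le_segment_snd ht k l
  · have hik : i < k := by simpa using h
    simp only [segment]
    linarith [sum_Iio_add_le_sum_Iio (fun i => ht.nonneg (i, j)) hik]

variable (hp₁ : ∀ x ∈ p₁, 0 ≤ x.2) (hp₂ : ∀ x ∈ p₂, 0 ≤ x.2)
include hp₁ hp₂

lemma precedes_segment {ij kl : Fin p₁.length × Fin p₂.length} (h : ij < kl) :
    Precedes (segment p₁ p₂ t ij) (segment p₁ p₂ t kl) :=
  ⟨segment_fst_add_le ht hp₁ h, segment_snd_add_le ht hp₂ h⟩

lemma isMatching_matchingOf : IsMatching (eLen p₁) (eLen p₂) (matchingOf p₁ p₂ t) := by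
  have hmem : ∀ m ∈ matchingOf p₁ p₂ t, ∃ ij, 0 < t ij ∧ segment p₁ p₂ t ij = m := by
    simp [matchingOf]
  refine isMatching_of_pairwise (fun m hm => ?_) (fun m hm => ?_) (fun m hm => ?_) ?_
  · obtain ⟨ij, hij, rfl⟩ := hmem m hm
    exact hij
  · obtain ⟨⟨i, j⟩, -, rfl⟩ := hmem m hm
    exact (mSegX_segment_subset ht i j).trans (block_subset_Ico hp₁ i)
  · obtain ⟨⟨i, j⟩, -, rfl⟩ := hmem m hm
    exact (mSegY_segment_subset ht i j).trans (block_subset_Ico hp₂ j)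
  · rw [matchingOf, List.pairwise_map]
    refine (Finset.nodup_toList _).imp_of_mem fun hij hkl hne => ?_
    simp only [Finset.mem_toList, Finset.mem_filter, Finset.mem_univ, true_and] at hij hkl
    rcases ht.le_or_le_of_pos hij hkl with h | h
    · exact Or.inl (precedes_segment ht hp₁ hp₂ (h.lt_of_ne hne))
    · exact Or.inr (precedes_segment ht hp₁ hp₂ (h.lt_of_ne hne.symm))

lemma volume_real_cell_segment (ij kl : Fin p₁.length × Fin p₂.length) :
    volume.real (cell p₁ p₂ (segment p₁ p₂ t ij) kl) = if ij = kl then t ij else 0 := by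
  obtain ⟨i, j⟩ := ij
  have hmem : ∀ s ∈ Ico 0 (t (i, j)), (segment p₁ p₂ t (i, j)).1 + s ∈ block p₁ i ∧
      (segment p₁ p₂ t (i, j)).2.1 + s ∈ block p₂ j := fun s hs =>
    ⟨mSegX_segment_subset ht i j ⟨le_add_of_nonneg_right hs.1, add_lt_add_right hs.2 _⟩,
      mSegY_segment_subset ht i j ⟨le_add_of_nonneg_right hs.1, add_lt_add_right hs.2 _⟩⟩
  split_ifs with h
  · subst h
    have hcell : cell p₁ p₂ (segment p₁ p₂ t (i, j)) (i, j) = Ico 0 (t (i, j)) :=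
      Subset.antisymm (fun s hs => hs.1.1) fun s hs => ⟨⟨hs, (hmem s hs).1⟩, (hmem s hs).2⟩
    rw [hcell, Real.volume_real_Ico_of_le (ht.nonneg _), sub_zero]
  · have hcell : cell p₁ p₂ (segment p₁ p₂ t (i, j)) kl = ∅ :=
      eq_empty_of_forall_notMem fun s ⟨⟨hs, hx⟩, hy⟩ => h (Prod.ext
        (Fin.ext (eq_of_mem_block hp₁ (hmem s hs).1 hx))
        (Fin.ext (eq_of_mem_block hp₂ (hmem s hs).2 hy)))
    rw [hcell, measureReal_empty]

lemma planOf_matchingOf : planOf p₁ p₂ (matchingOf p₁ p₂ t) = t := by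
  funext kl
  rw [planOf, matchingOf, List.map_map, Finset.sum_map_toList]
  simp only [comp_def, volume_real_cell_segment ht hp₁ hp₂, Finset.sum_ite_eq',
    Finset.mem_filter, Finset.mem_univ, true_and]
  split_ifs with h
  · rfl
  · exact (ht.nonneg kl).antisymm (not_lt.1 h)

end MatchingOfPlan

end ExpStr

end

open ExpStr in
theorem matching_inf_attained_general {α : Type*} [Inhabited α]
    (wdel wins : α → ℝ) (wsub : α → α → ℝ)
    (p₁ p₂ : List (α × ℝ)) (h₁ : RES p₁) (h₂ : RES p₂) :
    ∃ M : List (ℝ × ℝ × ℝ), IsMatching (eLen p₁) (eLen p₂) M ∧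
      mCost wdel wins wsub p₁ p₂ M =
        sInf {c | ∃ M' : List (ℝ × ℝ × ℝ),
          IsMatching (eLen p₁) (eLen p₂) M' ∧ c = mCost wdel wins wsub p₁ p₂ M'} := by
  have hp₁ : ∀ x ∈ p₁, 0 ≤ x.2 := fun x hx => (h₁.2 x hx).le
  have hp₂ : ∀ x ∈ p₂, 0 ≤ x.2 := fun x hx => (h₂.2 x hx).le
  obtain ⟨t, ht, hmin⟩ := exists_isPlan_isMinOn p₁ p₂ hp₁ hp₂ wdel wins wsub
  have hM := isMatching_matchingOf ht hp₁ hp₂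
  refine ⟨matchingOf p₁ p₂ t, hM, (IsLeast.csInf_eq ?_).symm⟩
  refine ⟨⟨_, hM, rfl⟩, ?_⟩
  rintro _ ⟨M, hM', rfl⟩
  rw [mCost_eq_planCost hp₁ hp₂ hM, mCost_eq_planCost hp₁ hp₂ hM', planOf_matchingOf ht hp₁ hp₂]
  exact hmin (isPlan_planOf hp₁ hp₂ hM')

open ExpStr in
/-- The infimum defining the exp-edit distance via exp-matchings is attained:
for `ℝ⁺`-exponent-strings `p₁, p₂` there is an exp-matching whose cost equals
the infimum of the costs of all exp-matchings from `p₁` to `p₂`. -/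
theorem matching_inf_attained {α : Type*} [DecidableEq α] [Inhabited α]
    (wdel wins : α → ℝ) (wsub : α → α → ℝ)
    (hdel : ∀ a, 0 < wdel a) (hins : ∀ a, 0 < wins a)
    (hsub0 : ∀ a, wsub a a = 0) (hsubpos : ∀ a b, a ≠ b → 0 < wsub a b)
    (htri₁ : ∀ a b c, wsub a c ≤ wsub a b + wsub b c)
    (htri₂ : ∀ a b, wsub a b ≤ wdel a + wins b)
    (htri₃ : ∀ a b, wins b ≤ wins a + wsub a b)
    (htri₄ : ∀ a b, wdel a ≤ wsub a b + wdel b)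
    (p₁ p₂ : List (α × ℝ)) (h₁ : RES p₁) (h₂ : RES p₂) :
    ∃ M : List (ℝ × ℝ × ℝ), IsMatching (eLen p₁) (eLen p₂) M ∧
      mCost wdel wins wsub p₁ p₂ M =
        sInf {c | ∃ M' : List (ℝ × ℝ × ℝ),
          IsMatching (eLen p₁) (eLen p₂) M' ∧ c = mCost wdel wins wsub p₁ p₂ M'} :=
  matching_inf_attained_general wdel wins wsub p₁ p₂ h₁ h₂
end

section
/- For ℝ⁺-exponent-strings w, u, v, the exp-edit distance satisfies dist(w·u, w·v) = dist(u, v) and dist(u·w, v·w) = dist(u, v); i.e., exp-edit distance is invariant under common prefixes and common suffixes. -/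
/-!
Exp-edit sequences are compared with alignments: sequences of blocks `x^t ↦ y^t` with
`x, y ∈ Σ ∪ {λ}`, a block costing `t` times the weight of `x ↦ y`. Every alignment is realised by
an edit sequence of the same cost. Conversely, alignments compose: a block `x^t ↦ y^t` of the
second alignment is pushed back through the blocks of the first one that produce `x^t`, which
the triangle inequality through the letter `x` allows at no extra cost. Since a single edit step
is an alignment, every edit sequence is dominated by an alignment.

In an alignment of `a^p U` with `a^q V` the blocks reading the leading `a`'s can be removed,
the unmatched `a^|p - q|` being paid for by one insertion or deletion. For `p = q` this is free,
so a common prefix cancels run by run. Common suffixes reduce to prefixes by reversing all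
strings.
-/

namespace ExpStr

section Concatenation

variable {α : Type*}

namespace RES

theorem nil : RES ([] : List (α × ℝ)) := ⟨List.isChain_nil, by simp⟩

theorem singleton {a : α} {s : ℝ} (hs : 0 < s) : RES [(a, s)] :=
  ⟨List.isChain_singleton _, by simpa using hs⟩

theorem tail {x : α × ℝ} {X : List (α × ℝ)} (h : RES (x :: X)) : RES X :=
  ⟨h.1.tail, fun y hy => h.2 y (List.mem_cons_of_mem _ hy)⟩

theorem head_pos {a : α} {s : ℝ} {X : List (α × ℝ)} (h : RES ((a, s) :: X)) : 0 < s :=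
  h.2 _ List.mem_cons_self

theorem cons {a : α} {s : ℝ} {X : List (α × ℝ)} (hs : 0 < s) (hX : RES X)
    (hne : ∀ y ∈ X.head?, a ≠ y.1) : RES ((a, s) :: X) :=
  ⟨List.isChain_cons.2 ⟨hne, hX.1⟩, fun y hy => by
    rcases List.mem_cons.1 hy with rfl | hy
    exacts [hs, hX.2 y hy]⟩

theorem reverse {l : List (α × ℝ)} (h : RES l) : RES l.reverse :=
  ⟨List.isChain_reverse.2 (h.1.imp fun _ _ hab => hab.symm),
    fun x hx => h.2 x (List.mem_reverse.1 hx)⟩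

end RES

variable [DecidableEq α]

@[simp] theorem rcat_nil_left (q : List (α × ℝ)) : rcat [] q = q := by
  simp [rcat, eCat]

@[simp] theorem rcat_nil_right (p : List (α × ℝ)) : rcat p [] = p := by
  unfold rcat eCat
  split <;> simp_all

theorem rcat_singleton_cons (a b : α) (s t : ℝ) (X : List (α × ℝ)) :
    rcat [(a, s)] ((b, t) :: X) =
      if a = b then (a, s + t) :: X else (a, s) :: (b, t) :: X := by
  simp [rcat, eCat]

theorem rcat_cons (x : α × ℝ) {p : List (α × ℝ)} (hp : p ≠ []) (q : List (α × ℝ)) :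
    rcat (x :: p) q = x :: rcat p q := by
  obtain ⟨y, p, rfl⟩ := List.exists_cons_of_ne_nil hp
  unfold rcat eCat
  rw [List.getLast?_cons_cons]
  split
  · split_ifs <;> simp_all [List.dropLast_cons_cons]
  · simp

theorem exists_rcat_cons_eq_cons (a : α) (s : ℝ) (p q : List (α × ℝ)) :
    ∃ t r, rcat ((a, s) :: p) q = (a, t) :: r := by
  rcases p with _ | ⟨y, p⟩
  · rcases q with _ | ⟨⟨b, t⟩, q⟩
    · exact ⟨s, [], rcat_nil_right _⟩
    · rw [rcat_singleton_cons]
      split_ifs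
      exacts [⟨_, _, rfl⟩, ⟨_, _, rfl⟩]
  · exact ⟨s, _, rcat_cons _ (List.cons_ne_nil y p) q⟩

theorem rcat_ne_nil {p : List (α × ℝ)} (hp : p ≠ []) (q : List (α × ℝ)) : rcat p q ≠ [] := by
  obtain ⟨⟨a, s⟩, p, rfl⟩ := List.exists_cons_of_ne_nil hp
  obtain ⟨t, r, h⟩ := exists_rcat_cons_eq_cons a s p q
  simp [h]

theorem rcat_singleton_rcat_singleton (a : α) (s t : ℝ) (X : List (α × ℝ)) :
    rcat [(a, s)] (rcat [(a, t)] X) = rcat [(a, s + t)] X := by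
  rcases X with _ | ⟨⟨b, u⟩, X⟩
  · simp [rcat_singleton_cons]
  · by_cases hab : a = b
    · subst hab
      simp [rcat_singleton_cons, add_assoc]
    · simp [rcat_singleton_cons, hab]

theorem rcat_singleton_assoc (x : α × ℝ) (q r : List (α × ℝ)) :
    rcat (rcat [x] q) r = rcat [x] (rcat q r) := by
  obtain ⟨a, s⟩ := x
  rcases q with _ | ⟨⟨b, t⟩, q⟩
  · rw [rcat_nil_right, rcat_nil_left]
  rw [rcat_singleton_cons]
  by_cases hab : a = b
  · subst hab
    rw [if_pos rfl]
    rcases q with _ | ⟨z, q⟩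
    · exact (rcat_singleton_rcat_singleton a s t r).symm
    · rw [rcat_cons _ (List.cons_ne_nil z q), rcat_cons _ (List.cons_ne_nil z q),
        rcat_singleton_cons, if_pos rfl]
  · rw [if_neg hab, rcat_cons _ (List.cons_ne_nil _ q)]
    obtain ⟨t', r', hr⟩ := exists_rcat_cons_eq_cons b t q r
    rw [hr, rcat_singleton_cons, if_neg hab, ← hr]

theorem rcat_assoc (p q r : List (α × ℝ)) : rcat (rcat p q) r = rcat p (rcat q r) := by
  induction p with
  | nil => rw [rcat_nil_left, rcat_nil_left]
  | cons x p ih =>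
    rcases eq_or_ne p [] with rfl | hp
    · exact rcat_singleton_assoc x q r
    · rw [rcat_cons x hp, rcat_cons x (rcat_ne_nil hp q), ih, rcat_cons x hp]

theorem rcat_concat_cons (p : List (α × ℝ)) (a b : α) (s t : ℝ) (q : List (α × ℝ)) :
    rcat (p ++ [(a, s)]) ((b, t) :: q) =
      if a = b then p ++ (a, s + t) :: q else p ++ (a, s) :: (b, t) :: q := by
  unfold rcat eCat
  rw [List.getLast?_concat]
  split_ifs with hab <;> simp [hab]

theorem reverse_rcat (p q : List (α × ℝ)) : (rcat p q).reverse = rcat q.reverse p.reverse := by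
  rcases q with _ | ⟨⟨b, t⟩, q⟩
  · rw [rcat_nil_right, List.reverse_nil, rcat_nil_left]
  induction p using List.reverseRecOn with
  | nil => rw [rcat_nil_left, List.reverse_nil, rcat_nil_right]
  | append_singleton p x _ =>
    obtain ⟨a, s⟩ := x
    rw [rcat_concat_cons, List.reverse_cons, List.reverse_concat, rcat_concat_cons]
    by_cases hab : a = b
    · subst hab
      simp [add_comm]
    · simp [hab, Ne.symm hab]

namespace RES

theorem rcat_singleton {a : α} {s : ℝ} {X : List (α × ℝ)} (hs : 0 < s) (hX : RES X) :
    RES (rcat [(a, s)] X) := by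
  rcases X with _ | ⟨⟨b, t⟩, X⟩
  · rw [rcat_nil_right]; exact singleton hs
  rw [rcat_singleton_cons]
  split_ifs with hab
  · subst hab
    exact cons (add_pos hs hX.head_pos) hX.tail (List.isChain_cons.1 hX.1).1
  · exact cons hs hX (by simpa using hab)

theorem rcat {p q : List (α × ℝ)} (hp : RES p) (hq : RES q) : RES (ExpStr.rcat p q) := by
  induction p with
  | nil => rwa [rcat_nil_left]
  | cons x p ih =>
    obtain ⟨a, s⟩ := x
    rcases p with _ | ⟨⟨b, t⟩, p⟩
    · exact rcat_singleton hp.head_pos hq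
    rw [rcat_cons _ (List.cons_ne_nil _ p)]
    obtain ⟨t', r', hr⟩ := exists_rcat_cons_eq_cons b t p q
    rw [hr] at ih ⊢
    exact cons hp.head_pos (ih hp.tail) (by simpa using (List.isChain_cons_cons.1 hp.1).1)

end RES

theorem rcat_singleton_of_RES {a : α} {s : ℝ} {X : List (α × ℝ)} (h : RES ((a, s) :: X)) :
    rcat [(a, s)] X = (a, s) :: X := by
  rcases X with _ | ⟨⟨b, t⟩, X⟩
  · exact rcat_nil_right _
  · rw [rcat_singleton_cons, if_neg (List.isChain_cons_cons.1 h.1).1]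

theorem rcat_cons_of_RES {x : α × ℝ} {P : List (α × ℝ)} (h : RES (x :: P))
    (X : List (α × ℝ)) : rcat (x :: P) X = rcat [x] (rcat P X) := by
  obtain ⟨a, s⟩ := x
  rw [← rcat_assoc, rcat_singleton_of_RES h]

end Concatenation

section Runs

variable {α : Type*} {a b : α} {s t m : ℝ} {X Y : List (α × ℝ)}

noncomputable def run (a : α) (s : ℝ) : List (α × ℝ) := if 0 < s then [(a, s)] else []

theorem run_of_pos (h : 0 < s) : run a s = [(a, s)] := if_pos h

theorem run_of_nonpos (h : s ≤ 0) : run a s = [] := if_neg h.not_gt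

/-- `runOpt x t` is `x^t` for a letter `x` of `Σ ∪ {λ}`, with `none` standing for `λ`. -/
noncomputable def runOpt : Option α → ℝ → List (α × ℝ)
  | some a, s => run a s
  | none, _ => []

@[simp] theorem runOpt_some : runOpt (some a) s = run a s := rfl

@[simp] theorem runOpt_none : runOpt (none : Option α) s = [] := rfl

variable [DecidableEq α]

theorem RES.rcat_run (hX : RES X) : RES (ExpStr.rcat (run a s) X) := by
  unfold run
  split_ifs with hs
  · exact RES.rcat_singleton hs hX
  · rwa [rcat_nil_left]

theorem rcat_run_run (hs : 0 ≤ s) (ht : 0 ≤ t) (X : List (α × ℝ)) :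
    rcat (run a s) (rcat (run a t) X) = rcat (run a (s + t)) X := by
  rcases hs.eq_or_lt with rfl | hs
  · rw [run_of_nonpos le_rfl, rcat_nil_left, zero_add]
  rcases ht.eq_or_lt with rfl | ht
  · rw [run_of_nonpos le_rfl, rcat_nil_left, add_zero]
  rw [run_of_pos hs, run_of_pos ht, run_of_pos (add_pos hs ht), rcat_singleton_rcat_singleton]

theorem rcat_run_ne_nil (hs : 0 < s) (X : List (α × ℝ)) : rcat (run a s) X ≠ [] := by
  rw [run_of_pos hs]
  exact rcat_ne_nil (List.cons_ne_nil _ _) X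

theorem fst_eq_of_rcat_run_eq (hs : 0 < s) (ht : 0 < t)
    (h : rcat (run a s) X = rcat (run b t) Y) : a = b := by
  obtain ⟨s', X', hX'⟩ := exists_rcat_cons_eq_cons a s [] X
  obtain ⟨t', Y', hY'⟩ := exists_rcat_cons_eq_cons b t [] Y
  rw [run_of_pos hs, run_of_pos ht, hX', hY'] at h
  exact (Prod.ext_iff.1 (List.cons_eq_cons.1 h).1).1

theorem rcat_run_left_cancel (hX : RES X) (hY : RES Y)
    (h : rcat (run a s) X = rcat (run a s) Y) : X = Y := by
  rcases le_or_gt s 0 with hs | hs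
  · simpa [run_of_nonpos hs] using h
  rw [run_of_pos hs] at h
  rcases X with _ | ⟨⟨c, u⟩, X⟩ <;> rcases Y with _ | ⟨⟨d, v⟩, Y⟩
  · rfl
  · have := hY.head_pos
    rw [rcat_nil_right, rcat_singleton_cons] at h
    split_ifs at h <;> simp_all
  · have := hX.head_pos
    rw [rcat_nil_right, rcat_singleton_cons] at h
    split_ifs at h <;> simp_all
  · have := hX.head_pos
    have := hY.head_pos
    rw [rcat_singleton_cons, rcat_singleton_cons] at h
    split_ifs at h <;> simp_all

theorem rcat_run_cancel (hX : RES X) (hY : RES Y) (hm : 0 ≤ m) (hms : m ≤ s) (hmt : m ≤ t)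
    (h : rcat (run a s) X = rcat (run a t) Y) :
    rcat (run a (s - m)) X = rcat (run a (t - m)) Y := by
  refine rcat_run_left_cancel (a := a) (s := m) hX.rcat_run hY.rcat_run ?_
  rwa [rcat_run_run hm (sub_nonneg.2 hms), rcat_run_run hm (sub_nonneg.2 hmt), add_sub_cancel,
    add_sub_cancel]

theorem eq_rcat_run_sub (hX : RES X) (hY : RES Y) (hs : 0 ≤ s) (hst : s ≤ t)
    (h : rcat (run a s) X = rcat (run a t) Y) : X = rcat (run a (t - s)) Y := by
  simpa [run_of_nonpos] using rcat_run_cancel hX hY hs le_rfl hst h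

theorem rcat_run_trichotomy (hX : RES X) (hY : RES Y) (hs : 0 < s) (ht : 0 < t)
    (h : rcat (run b s) X = rcat (run a t) Y) :
    b = a ∧ (s < t ∧ X = rcat (run a (t - s)) Y ∨ s = t ∧ X = Y ∨
      t < s ∧ Y = rcat (run a (s - t)) X) := by
  obtain rfl := fst_eq_of_rcat_run_eq hs ht h
  refine ⟨rfl, ?_⟩
  rcases lt_trichotomy s t with hst | rfl | hst
  · exact Or.inl ⟨hst, eq_rcat_run_sub hX hY hs.le hst.le h⟩
  · exact Or.inr (Or.inl ⟨rfl, rcat_run_left_cancel hX hY h⟩)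
  · exact Or.inr (Or.inr ⟨hst, eq_rcat_run_sub hY hX ht.le hst.le h.symm⟩)

theorem RES.runOpt (x : Option α) (s : ℝ) : RES (ExpStr.runOpt x s) := by
  cases x
  · exact RES.nil
  · simpa using (RES.nil (α := α)).rcat_run (a := _) (s := s)

theorem rcat_runOpt_runOpt (x : Option α) (hs : 0 ≤ s) (ht : 0 ≤ t) (X : List (α × ℝ)) :
    rcat (runOpt x s) (rcat (runOpt x t) X) = rcat (runOpt x (s + t)) X := by
  cases x
  · simp
  · exact rcat_run_run hs ht X

end Runs

section Alignment

variable {α : Type*} [DecidableEq α] {w : Option α → Option α → ℝ}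
  {U V X Y Z : List (α × ℝ)} {c : ℝ}

/-- `Aligns w U V c`: `U` can be aligned with `V` at cost at most `c`, an alignment being a
sequence of blocks `x^t ↦ y^t` with `x, y ∈ Σ ∪ {λ}` (see `runOpt`), each costing `t * w x y`. -/
inductive Aligns (w : Option α → Option α → ℝ) :
    List (α × ℝ) → List (α × ℝ) → ℝ → Prop
  | nil : Aligns w [] [] 0
  | cons {U V : List (α × ℝ)} {c : ℝ} (x y : Option α) {t : ℝ} (ht : 0 < t) :
      Aligns w U V c → Aligns w (rcat (runOpt x t) U) (rcat (runOpt y t) V) (t * w x y + c)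
  | mono {U V : List (α × ℝ)} {c c' : ℝ} : Aligns w U V c → c ≤ c' → Aligns w U V c'

namespace Aligns

theorem res (h : Aligns w U V c) : RES U ∧ RES V := by
  induction h with
  | nil => exact ⟨RES.nil, RES.nil⟩
  | cons x y _ _ ih => exact ⟨(RES.runOpt x _).rcat ih.1, (RES.runOpt y _).rcat ih.2⟩
  | mono _ _ ih => exact ih

theorem append {X₁ X₂ Y₁ Y₂ : List (α × ℝ)} {c₁ c₂ : ℝ} (h₁ : Aligns w X₁ Y₁ c₁)
    (h₂ : Aligns w X₂ Y₂ c₂) : Aligns w (rcat X₁ X₂) (rcat Y₁ Y₂) (c₁ + c₂) := by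
  induction h₁ with
  | nil => simpa using h₂
  | cons x y ht _ ih =>
    rw [rcat_assoc, rcat_assoc, add_assoc]
    exact ih.cons x y ht
  | mono _ hc ih => exact ih.mono (by linarith)

theorem refl (h0 : ∀ a, w (some a) (some a) = 0) (hU : RES U) : Aligns w U U 0 := by
  induction U with
  | nil => exact nil
  | cons x U ih =>
    obtain ⟨a, s⟩ := x
    have := (ih hU.tail).cons (some a) (some a) hU.head_pos
    rwa [h0, mul_zero, zero_add, runOpt_some, run_of_pos hU.head_pos,
      rcat_singleton_of_RES hU] at this

theorem single (h0 : ∀ a, w (some a) (some a) = 0) {P₁ P₂ : List (α × ℝ)} (hP₁ : RES P₁)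
    (hP₂ : RES P₂) (x y : Option α) {t : ℝ} (ht : 0 < t) :
    Aligns w (rcat P₁ (rcat (runOpt x t) P₂)) (rcat P₁ (rcat (runOpt y t) P₂)) (t * w x y) := by
  simpa using (refl h0 hP₁).append ((refl h0 hP₂).cons x y ht)

theorem exists_split_run {b : α} {r : ℝ} (h : Aligns w X (rcat (run b r) Z) c) (hr : 0 < r)
    (hZ : RES Z) : ∃ X₁ X₂ c₁ c₂, X = rcat X₁ X₂ ∧ Aligns w X₁ (run b r) c₁ ∧
      Aligns w X₂ Z c₂ ∧ c₁ + c₂ ≤ c := by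
  generalize hY : rcat (run b r) Z = Y at h
  induction h generalizing r Z with
  | nil => exact absurd hY (rcat_run_ne_nil hr Z)
  | @cons U V c x y t ht h ih =>
    cases y with
    | none =>
      rw [runOpt_none, rcat_nil_left] at hY
      obtain ⟨X₁, X₂, c₁, c₂, rfl, h₁, h₂, hc⟩ := ih hr hZ hY
      refine ⟨rcat (runOpt x t) X₁, X₂, t * w x none + c₁, c₂, (rcat_assoc ..).symm, ?_, h₂,
        by linarith⟩
      simpa using h₁.cons x none ht
    | some b' =>
      rw [runOpt_some] at hY
      obtain ⟨rfl, ⟨hrt, rfl⟩ | ⟨rfl, rfl⟩ | ⟨htr, rfl⟩⟩ :=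
        rcat_run_trichotomy h.res.2 hZ ht hr hY.symm
      · obtain ⟨X₁, X₂, c₁, c₂, rfl, h₁, h₂, hc⟩ := ih (sub_pos.2 hrt) hZ rfl
        refine ⟨rcat (runOpt x t) X₁, X₂, t * w x (some b') + c₁, c₂, (rcat_assoc ..).symm, ?_,
          h₂, by linarith⟩
        have := h₁.cons x (some b') ht
        rwa [runOpt_some, ← rcat_nil_right (run b' (r - t)), rcat_run_run ht.le (sub_pos.2 hrt).le,
          add_sub_cancel, rcat_nil_right] at this
      · exact ⟨runOpt x t, U, t * w x (some b') + 0, c, rfl,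
          by simpa using nil.cons x (some b') ht, h, by linarith⟩
      · refine ⟨runOpt x r, rcat (runOpt x (t - r)) U, r * w x (some b') + 0,
          (t - r) * w x (some b') + c, ?_, by simpa using nil.cons x (some b') hr,
          h.cons x (some b') (sub_pos.2 htr), le_of_eq (by ring)⟩
        rw [rcat_runOpt_runOpt x hr.le (sub_pos.2 htr).le, add_sub_cancel]
  | mono _ hc ih =>
    obtain ⟨X₁, X₂, c₁, c₂, hX, h₁, h₂, hc'⟩ := ih hr hZ hY
    exact ⟨X₁, X₂, c₁, c₂, hX, h₁, h₂, hc'.trans hc⟩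

theorem exists_split {x : Option α} {r : ℝ} (h : Aligns w X (rcat (runOpt x r) Z) c) (hr : 0 < r)
    (hZ : RES Z) : ∃ X₁ X₂ c₁ c₂, X = rcat X₁ X₂ ∧ Aligns w X₁ (runOpt x r) c₁ ∧
      Aligns w X₂ Z c₂ ∧ c₁ + c₂ ≤ c := by
  cases x with
  | none =>
    exact ⟨[], X, 0, c, (rcat_nil_left X).symm, nil, by simpa using h, by simp⟩
  | some b => exact h.exists_split_run hr hZ

theorem retarget_run (htri : ∀ x a y, w x y ≤ w x (some a) + w (some a) y) {a : α} {q : ℝ}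
    (h : Aligns w X (run a q) c) (hq : 0 < q) (y : Option α) :
    Aligns w X (runOpt y q) (c + q * w (some a) y) := by
  generalize hY : run a q = Y at h
  induction h generalizing q with
  | nil => exact absurd hY (by rw [run_of_pos hq]; exact List.cons_ne_nil _ _)
  | @cons U V c x y' t ht h ih =>
    cases y' with
    | none =>
      rw [runOpt_none, rcat_nil_left] at hY
      simpa [add_assoc] using (ih hq hY).cons x none ht
    | some b =>
      rw [runOpt_some, ← rcat_nil_right (run a q)] at hY
      obtain ⟨rfl, ⟨htq, rfl⟩ | ⟨rfl, rfl⟩ | ⟨hqt, hV⟩⟩ :=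
        rcat_run_trichotomy h.res.2 RES.nil ht hq hY.symm
      · have := (ih (sub_pos.2 htq) (rcat_nil_right _).symm).cons x y ht
        rw [← rcat_nil_right (runOpt y (q - t)), rcat_runOpt_runOpt y ht.le (sub_pos.2 htq).le,
          add_sub_cancel, rcat_nil_right] at this
        refine this.mono ?_
        nlinarith [mul_le_mul_of_nonneg_left (htri x b y) ht.le]
      · have := h.cons x y ht
        rw [rcat_nil_right] at this
        refine this.mono ?_
        nlinarith [mul_le_mul_of_nonneg_left (htri x b y) ht.le]
      · exact absurd hV.symm (rcat_run_ne_nil (sub_pos.2 hqt) V)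
  | mono _ hc ih => exact (ih hq hY).mono (by linarith)

theorem retarget (htri : ∀ x a y, w x y ≤ w x (some a) + w (some a) y) {x : Option α} {q : ℝ}
    (h : Aligns w X (runOpt x q) c) (hq : 0 < q) (y : Option α) :
    Aligns w X (runOpt y q) (c + q * w x y) := by
  cases x with
  | none => simpa [add_comm] using h.cons none y hq
  | some a => exact h.retarget_run htri hq y

theorem trans (htri : ∀ x a y, w x y ≤ w x (some a) + w (some a) y) {c₁ c₂ : ℝ}
    (h₁ : Aligns w U X c₁) (h₂ : Aligns w X V c₂) : Aligns w U V (c₁ + c₂) := by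
  induction h₂ generalizing U c₁ with
  | nil => simpa using h₁
  | @cons X V c x y t ht h₂ ih =>
    obtain ⟨U₁, U₂, d₁, d₂, rfl, hU₁, hU₂, hd⟩ := h₁.exists_split ht h₂.res.1
    exact ((hU₁.retarget htri ht y).append (ih hU₂)).mono (by linarith)
  | mono _ hc ih => exact (ih h₁).mono (by linarith)

end Aligns

end Alignment

section GapCost

variable {α : Type*} {w : Option α → Option α → ℝ} {a : α} {p q s t : ℝ}
  {U V X Y : List (α × ℝ)} {c : ℝ}

/-- The price of the unmatched `a^|p - q|` when `a^p` is cancelled against `a^q`: it is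
inserted in front of the source if `p > q` and deleted from the front of the target if `q > p`. -/
def gapCost (w : Option α → Option α → ℝ) (a : α) (p q : ℝ) : ℝ :=
  max (p - q) 0 * w none (some a) + max (q - p) 0 * w (some a) none

theorem gapCost_self : gapCost w a p p = 0 := by simp [gapCost]

theorem gapCost_sub_sub : gapCost w a (p - t) (q - t) = gapCost w a p q := by
  simp only [gapCost, sub_sub_sub_cancel_right]

theorem gapCost_sub_left_le (hdel : 0 ≤ w (some a) none) (hins : 0 ≤ w none (some a))
    (hs : 0 ≤ s) : gapCost w a (p - s) q ≤ gapCost w a p q + s * w (some a) none := by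
  have h₁ : max (p - s - q) 0 ≤ max (p - q) 0 := max_le_max (by linarith) le_rfl
  have h₂ : max (q - (p - s)) 0 ≤ max (q - p) 0 + s :=
    max_le (by linarith [le_max_left (q - p) 0]) (by linarith [le_max_right (q - p) 0])
  unfold gapCost
  nlinarith [mul_le_mul_of_nonneg_right h₁ hins, mul_le_mul_of_nonneg_right h₂ hdel]

theorem gapCost_sub_right_le (hdel : 0 ≤ w (some a) none) (hins : 0 ≤ w none (some a))
    (ht : 0 ≤ t) : gapCost w a p (q - t) ≤ gapCost w a p q + t * w none (some a) := by
  have h₁ : max (p - (q - t)) 0 ≤ max (p - q) 0 + t :=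
    max_le (by linarith [le_max_left (p - q) 0]) (by linarith [le_max_right (p - q) 0])
  have h₂ : max (q - t - p) 0 ≤ max (q - p) 0 := max_le_max (by linarith) le_rfl
  unfold gapCost
  nlinarith [mul_le_mul_of_nonneg_right h₁ hins, mul_le_mul_of_nonneg_right h₂ hdel]

theorem sub_mul_le_gapCost_left (hdel : 0 ≤ w (some a) none) (hins : 0 ≤ w none (some a)) :
    (p - q) * w none (some a) ≤ gapCost w a p q := by
  unfold gapCost
  nlinarith [mul_le_mul_of_nonneg_right (le_max_left (p - q) 0) hins,
    mul_nonneg (le_max_right (q - p) 0) hdel]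

theorem sub_mul_le_gapCost_right (hdel : 0 ≤ w (some a) none) (hins : 0 ≤ w none (some a)) :
    (q - p) * w (some a) none ≤ gapCost w a p q := by
  unfold gapCost
  nlinarith [mul_le_mul_of_nonneg_right (le_max_left (q - p) 0) hdel,
    mul_nonneg (le_max_right (p - q) 0) hins]

variable [DecidableEq α]

namespace Aligns

theorem drop_source_run (h0 : ∀ a, w (some a) (some a) = 0)
    (htri : ∀ x a y, w x y ≤ w x (some a) + w (some a) y) (hU : RES U) (hp : 0 ≤ p)
    (h : Aligns w (rcat (run a p) U) V c) : Aligns w U V (p * w none (some a) + c) := by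
  rcases hp.eq_or_lt with rfl | hp
  · simpa [run_of_nonpos] using h
  · simpa using ((refl h0 hU).cons none (some a) hp).trans htri h

theorem drop_target_run (h0 : ∀ a, w (some a) (some a) = 0)
    (htri : ∀ x a y, w x y ≤ w x (some a) + w (some a) y) (hV : RES V) (hq : 0 ≤ q)
    (h : Aligns w U (rcat (run a q) V) c) : Aligns w U V (c + q * w (some a) none) := by
  rcases hq.eq_or_lt with rfl | hq
  · simpa [run_of_nonpos] using h
  · simpa using h.trans htri ((refl h0 hV).cons (some a) none hq)

theorem cancel_run_of_zero (h0 : ∀ a, w (some a) (some a) = 0)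
    (htri : ∀ x a y, w x y ≤ w x (some a) + w (some a) y) (hp : 0 ≤ p) (hq : 0 ≤ q)
    (hU : RES U) (hV : RES V) (hpq : p = 0 ∨ q = 0)
    (h : Aligns w (rcat (run a p) U) (rcat (run a q) V) c) :
    Aligns w U V (c + gapCost w a p q) := by
  rcases hpq with rfl | rfl
  · rw [run_of_nonpos le_rfl, rcat_nil_left] at h
    simpa [gapCost, hq] using h.drop_target_run h0 htri hV hq
  · rw [run_of_nonpos le_rfl, rcat_nil_left] at h
    simpa [gapCost, hp, add_comm] using h.drop_source_run h0 htri hU hp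

end Aligns

end GapCost

section Cancellation

variable {α : Type*} [DecidableEq α] {w : Option α → Option α → ℝ} {a b : α} {t c : ℝ}
  {U V X Y : List (α × ℝ)}

variable (w a) in
def CancelsRun (X Y : List (α × ℝ)) (c : ℝ) : Prop :=
  ∀ ⦃p q : ℝ⦄ ⦃U V : List (α × ℝ)⦄, 0 ≤ p → 0 ≤ q → RES U → RES V →
    X = rcat (run a p) U → Y = rcat (run a q) V → Aligns w U V (c + gapCost w a p q)

namespace CancelsRun

theorem mono {c' : ℝ} (h : CancelsRun w a X Y c) (hc : c ≤ c') : CancelsRun w a X Y c' :=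
  fun _ _ _ _ hp hq hU hV hX hY => (h hp hq hU hV hX hY).mono (by linarith)

theorem of_pos (h0 : ∀ a, w (some a) (some a) = 0)
    (htri : ∀ x a y, w x y ≤ w x (some a) + w (some a) y) (h : Aligns w X Y c)
    (H : ∀ ⦃p q : ℝ⦄ ⦃U V : List (α × ℝ)⦄, 0 < p → 0 < q → RES U → RES V →
      X = rcat (run a p) U → Y = rcat (run a q) V → Aligns w U V (c + gapCost w a p q)) :
    CancelsRun w a X Y c := by
  intro p q U V hp hq hU hV hX hY
  by_cases hpq : p = 0 ∨ q = 0
  · subst hX hY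
    exact h.cancel_run_of_zero h0 htri hp hq hU hV hpq
  · obtain ⟨hp0, hq0⟩ := not_or.1 hpq
    exact H (hp.lt_of_ne' hp0) (hq.lt_of_ne' hq0) hU hV hX hY

theorem cons_ins (h0 : ∀ a, w (some a) (some a) = 0)
    (htri : ∀ x a y, w x y ≤ w x (some a) + w (some a) y) (hdel : ∀ x, 0 ≤ w x none)
    (hins : ∀ y, 0 ≤ w none y) (ih : CancelsRun w a U V c) (h : Aligns w U V c) (ht : 0 < t) :
    CancelsRun w a U (rcat (run b t) V) (t * w none (some b) + c) := by
  have hd := hdel (some a)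
  have hi := hins (some a)
  refine of_pos h0 htri (by simpa using h.cons none (some b) ht)
    fun p q U₀ V₀ hp hq hU₀ hV₀ hX hY => ?_
  obtain rfl := fst_eq_of_rcat_run_eq ht hq hY
  obtain ⟨hU, hV⟩ := h.res
  rcases le_or_gt t q with htq | hqt
  · exact (ih hp.le (sub_nonneg.2 htq) hU₀ hV₀ hX (eq_rcat_run_sub hV hV₀ ht.le htq hY)).mono
      (by linarith [gapCost_sub_right_le (p := p) (q := q) hd hi ht.le])
  · have := h.cons none (some b) (sub_pos.2 hqt)
    rw [runOpt_none, rcat_nil_left, hX, runOpt_some,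
      ← eq_rcat_run_sub hV₀ hV hq.le hqt.le hY.symm] at this
    exact (this.drop_source_run h0 htri hU₀ hp.le).mono
      (by linarith [sub_mul_le_gapCost_left (p := p) (q := q) hd hi])

theorem cons_del (h0 : ∀ a, w (some a) (some a) = 0)
    (htri : ∀ x a y, w x y ≤ w x (some a) + w (some a) y) (hdel : ∀ x, 0 ≤ w x none)
    (hins : ∀ y, 0 ≤ w none y) (ih : CancelsRun w a U V c) (h : Aligns w U V c) (ht : 0 < t) :
    CancelsRun w a (rcat (run b t) U) V (t * w (some b) none + c) := by
  have hd := hdel (some a)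
  have hi := hins (some a)
  refine of_pos h0 htri (by simpa using h.cons (some b) none ht)
    fun p q U₀ V₀ hp hq hU₀ hV₀ hX hY => ?_
  obtain rfl := fst_eq_of_rcat_run_eq ht hp hX
  obtain ⟨hU, hV⟩ := h.res
  rcases le_or_gt t p with htp | hpt
  · exact (ih (sub_nonneg.2 htp) hq.le hU₀ hV₀ (eq_rcat_run_sub hU hU₀ ht.le htp hX) hY).mono
      (by linarith [gapCost_sub_left_le (p := p) (q := q) hd hi ht.le])
  · have := h.cons (some b) none (sub_pos.2 hpt)
    rw [runOpt_none, rcat_nil_left, hY, runOpt_some,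
      ← eq_rcat_run_sub hU₀ hU hp.le hpt.le hX.symm] at this
    exact (this.drop_target_run h0 htri hV₀ hq.le).mono
      (by linarith [sub_mul_le_gapCost_right (p := p) (q := q) hd hi])

theorem cons_sub (h0 : ∀ a, w (some a) (some a) = 0)
    (htri : ∀ x a y, w x y ≤ w x (some a) + w (some a) y) {b' : α}
    (ih : CancelsRun w a U V c) (h : Aligns w U V c) (ht : 0 < t) :
    CancelsRun w a (rcat (run b t) U) (rcat (run b' t) V) (t * w (some b) (some b') + c) := by
  refine of_pos h0 htri (h.cons (some b) (some b') ht) fun p q U₀ V₀ hp hq hU₀ hV₀ hX hY => ?_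
  obtain rfl := fst_eq_of_rcat_run_eq ht hp hX
  obtain rfl := (fst_eq_of_rcat_run_eq ht hq hY).symm
  obtain ⟨hU, hV⟩ := h.res
  rw [h0, mul_zero, zero_add]
  by_cases hle : t ≤ p ∧ t ≤ q
  · simpa [gapCost_sub_sub] using ih (sub_nonneg.2 hle.1) (sub_nonneg.2 hle.2) hU₀ hV₀
      (eq_rcat_run_sub hU hU₀ ht.le hle.1 hX) (eq_rcat_run_sub hV hV₀ ht.le hle.2 hY)
  have hmt : min p q < t := by
    rcases not_and_or.1 hle with h | h
    · exact (min_le_left p q).trans_lt (not_le.1 h)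
    · exact (min_le_right p q).trans_lt (not_le.1 h)
  have hm : 0 ≤ min p q := le_min hp.le hq.le
  have := h.cons (some b) (some b) (sub_pos.2 hmt)
  simp only [runOpt_some] at this
  rw [rcat_run_cancel hU hU₀ hm hmt.le (min_le_left p q) hX,
    rcat_run_cancel hV hV₀ hm hmt.le (min_le_right p q) hY, h0, mul_zero, zero_add] at this
  simpa [gapCost_sub_sub] using this.cancel_run_of_zero h0 htri
    (sub_nonneg.2 (min_le_left p q)) (sub_nonneg.2 (min_le_right p q)) hU₀ hV₀
    (by rcases min_choice p q with h | h <;> simp [h])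

end CancelsRun

namespace Aligns

theorem cancelsRun (h0 : ∀ a, w (some a) (some a) = 0)
    (htri : ∀ x a y, w x y ≤ w x (some a) + w (some a) y) (hdel : ∀ x, 0 ≤ w x none)
    (hins : ∀ y, 0 ≤ w none y) (h : Aligns w X Y c) : CancelsRun w a X Y c := by
  induction h with
  | nil =>
    exact CancelsRun.of_pos h0 htri nil fun p _ U _ hp _ _ _ hX _ =>
      absurd hX.symm (rcat_run_ne_nil hp U)
  | @cons U V c x y t ht h ih =>
    cases x <;> cases y
    · simpa using ih.mono (by nlinarith [hdel none] : c ≤ t * w none none + c)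
    · simpa using ih.cons_ins h0 htri hdel hins h ht
    · simpa using ih.cons_del h0 htri hdel hins h ht
    · exact ih.cons_sub h0 htri h ht
  | mono _ hc ih => exact ih.mono hc

theorem cancel_rcat_left (h0 : ∀ a, w (some a) (some a) = 0)
    (htri : ∀ x a y, w x y ≤ w x (some a) + w (some a) y) (hdel : ∀ x, 0 ≤ w x none)
    (hins : ∀ y, 0 ≤ w none y) {W : List (α × ℝ)} (hW : RES W) (hU : RES U) (hV : RES V)
    (h : Aligns w (rcat W U) (rcat W V) c) : Aligns w U V c := by
  induction W with
  | nil => simpa using h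
  | cons x W ih =>
    obtain ⟨a, r⟩ := x
    have hr := hW.head_pos
    refine ih hW.tail ?_
    simpa [gapCost_self] using h.cancelsRun (a := a) h0 htri hdel hins hr.le hr.le
      (hW.tail.rcat hU) (hW.tail.rcat hV) (by rw [run_of_pos hr, rcat_cons_of_RES hW])
      (by rw [run_of_pos hr, rcat_cons_of_RES hW])

end Aligns

end Cancellation

section EditDistance

variable {α : Type*} {wdel wins : α → ℝ} {wsub : α → α → ℝ}

variable (wdel wins wsub) in
/-- The three weights as one cost function on `Σ ∪ {λ}`. -/
def opCost : Option α → Option α → ℝ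
  | some a, some b => wsub a b
  | some a, none => wdel a
  | none, some b => wins b
  | none, none => 0

theorem opCost_triangle (hdel : ∀ a, 0 ≤ wdel a) (hins : ∀ a, 0 ≤ wins a)
    (htri₁ : ∀ a b c, wsub a c ≤ wsub a b + wsub b c)
    (htri₃ : ∀ a b, wins b ≤ wins a + wsub a b) (htri₄ : ∀ a b, wdel a ≤ wsub a b + wdel b)
    (x : Option α) (a : α) (y : Option α) :
    opCost wdel wins wsub x y ≤
      opCost wdel wins wsub x (some a) + opCost wdel wins wsub (some a) y := by
  rcases x with _ | c <;> rcases y with _ | b <;> simp only [opCost]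
  · linarith [hdel a, hins a]
  · exact htri₃ a b
  · exact htri₄ c a
  · exact htri₁ c a b

variable [DecidableEq α] {u v U V : List (α × ℝ)} {c : ℝ}

theorem Step.aligns (hsub0 : ∀ a, wsub a a = 0) (h : Step wdel wins wsub U V c) :
    Aligns (opCost wdel wins wsub) U V c := by
  obtain ⟨P₁, P₂, hP₁, hP₂, ⟨a, t, ht, rfl, rfl, rfl⟩ | ⟨a, t, ht, rfl, rfl, rfl⟩ |
    ⟨a, b, t, ht, rfl, rfl, rfl⟩⟩ := h
  · have := Aligns.single (w := opCost wdel wins wsub) hsub0 hP₁ hP₂ none (some a) ht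
    rwa [runOpt_none, runOpt_some, run_of_pos ht, rcat_nil_left] at this
  · have := Aligns.single (w := opCost wdel wins wsub) hsub0 hP₁ hP₂ (some a) none ht
    rwa [runOpt_none, runOpt_some, run_of_pos ht, rcat_nil_left] at this
  · have := Aligns.single (w := opCost wdel wins wsub) hsub0 hP₁ hP₂ (some a) (some b) ht
    rwa [runOpt_some, runOpt_some, run_of_pos ht, run_of_pos ht] at this

namespace EditCost

theorem single (h : Step wdel wins wsub U V c) : EditCost wdel wins wsub U V c := by
  simpa using EditCost.step EditCost.refl h

theorem trans {W : List (α × ℝ)} {c' : ℝ} (h : EditCost wdel wins wsub U V c)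
    (h' : EditCost wdel wins wsub V W c') : EditCost wdel wins wsub U W (c + c') := by
  induction h' with
  | refl => simpa using h
  | step _ hs ih => simpa [add_assoc] using ih.step hs

theorem rcat_left {W : List (α × ℝ)} (hW : RES W) (h : EditCost wdel wins wsub U V c) :
    EditCost wdel wins wsub (rcat W U) (rcat W V) c := by
  induction h with
  | refl => exact refl
  | step _ hs ih =>
    refine ih.step ?_
    obtain ⟨P₁, P₂, hP₁, hP₂, hcase⟩ := hs
    refine ⟨rcat W P₁, P₂, hW.rcat hP₁, hP₂, ?_⟩
    rcases hcase with ⟨a, t, ht, rfl, rfl, rfl⟩ | ⟨a, t, ht, rfl, rfl, rfl⟩ |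
      ⟨a, b, t, ht, rfl, rfl, rfl⟩
    · exact Or.inl ⟨a, t, ht, (rcat_assoc ..).symm, (rcat_assoc ..).symm, rfl⟩
    · exact Or.inr (Or.inl ⟨a, t, ht, (rcat_assoc ..).symm, (rcat_assoc ..).symm, rfl⟩)
    · exact Or.inr (Or.inr ⟨a, b, t, ht, (rcat_assoc ..).symm, (rcat_assoc ..).symm, rfl⟩)

theorem replace_runOpt (hV : RES V) {t : ℝ} (ht : 0 < t) (x y : Option α) :
    EditCost wdel wins wsub (rcat (runOpt x t) V) (rcat (runOpt y t) V)
      (t * opCost wdel wins wsub x y) := by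
  rcases x with _ | a <;> rcases y with _ | b <;> simp only [runOpt_none, runOpt_some,
    run_of_pos ht, rcat_nil_left, opCost]
  · simpa using (refl : EditCost wdel wins wsub V V 0)
  · exact single ⟨[], V, RES.nil, hV, Or.inl ⟨b, t, ht, by simp, by simp, rfl⟩⟩
  · exact single ⟨[], V, RES.nil, hV, Or.inr (Or.inl ⟨a, t, ht, by simp, by simp, rfl⟩)⟩
  · exact single ⟨[], V, RES.nil, hV, Or.inr (Or.inr ⟨a, b, t, ht, by simp, by simp, rfl⟩)⟩

end EditCost

theorem Aligns.exists_editCost (h : Aligns (opCost wdel wins wsub) U V c) :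
    ∃ c' ≤ c, EditCost wdel wins wsub U V c' := by
  induction h with
  | nil => exact ⟨0, le_rfl, .refl⟩
  | @cons U V c x y t ht h ih =>
    obtain ⟨c', hc', he⟩ := ih
    exact ⟨c' + t * opCost wdel wins wsub x y, by linarith,
      (he.rcat_left (RES.runOpt x t)).trans (EditCost.replace_runOpt h.res.2 ht x y)⟩
  | mono _ hc ih =>
    obtain ⟨c', hc', he⟩ := ih
    exact ⟨c', hc'.trans hc, he⟩

theorem Aligns.of_editCost (hsub0 : ∀ a, wsub a a = 0)
    (htri : ∀ x a y, opCost wdel wins wsub x y ≤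
      opCost wdel wins wsub x (some a) + opCost wdel wins wsub (some a) y)
    (hU : RES U) (h : EditCost wdel wins wsub U V c) : Aligns (opCost wdel wins wsub) U V c := by
  induction h with
  | refl => exact refl hsub0 hU
  | step _ hs ih => exact ih.trans htri (hs.aligns hsub0)

theorem eDist_rcat_left (hdel : ∀ a, 0 ≤ wdel a) (hins : ∀ a, 0 ≤ wins a)
    (hsub0 : ∀ a, wsub a a = 0) (htri₁ : ∀ a b c, wsub a c ≤ wsub a b + wsub b c)
    (htri₃ : ∀ a b, wins b ≤ wins a + wsub a b) (htri₄ : ∀ a b, wdel a ≤ wsub a b + wdel b)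
    {W : List (α × ℝ)} (hW : RES W) (hu : RES u) (hv : RES v) :
    eDist wdel wins wsub (rcat W u) (rcat W v) = eDist wdel wins wsub u v := by
  have htri := opCost_triangle hdel hins htri₁ htri₃ htri₄
  refine csInf_eq_csInf_of_forall_exists_le (fun c hc => ?_)
    fun c hc => ⟨c, hc.rcat_left hW, le_rfl⟩
  have := (Aligns.of_editCost hsub0 htri (hW.rcat hu) hc).cancel_rcat_left hsub0 htri
    (by rintro (_ | a); exacts [le_rfl, hdel a]) (by rintro (_ | a); exacts [le_rfl, hins a])
    hW hu hv
  obtain ⟨c', hc', he⟩ := this.exists_editCost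
  exact ⟨c', he, hc'⟩

theorem Step.reverse (h : Step wdel wins wsub u v c) :
    Step wdel wins wsub u.reverse v.reverse c := by
  obtain ⟨P₁, P₂, hP₁, hP₂, hcase⟩ := h
  refine ⟨P₂.reverse, P₁.reverse, hP₂.reverse, hP₁.reverse, ?_⟩
  have key : ∀ (a : α) (t : ℝ), (rcat P₁ (rcat [(a, t)] P₂)).reverse =
      rcat P₂.reverse (rcat [(a, t)] P₁.reverse) := by
    intro a t
    rw [reverse_rcat, reverse_rcat, List.reverse_singleton, rcat_assoc]
  rcases hcase with ⟨a, t, ht, rfl, rfl, rfl⟩ | ⟨a, t, ht, rfl, rfl, rfl⟩ |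
    ⟨a, b, t, ht, rfl, rfl, rfl⟩
  · exact Or.inl ⟨a, t, ht, reverse_rcat _ _, key a t, rfl⟩
  · exact Or.inr (Or.inl ⟨a, t, ht, key a t, reverse_rcat _ _, rfl⟩)
  · exact Or.inr (Or.inr ⟨a, b, t, ht, key a t, key b t, rfl⟩)

theorem EditCost.reverse (h : EditCost wdel wins wsub u v c) :
    EditCost wdel wins wsub u.reverse v.reverse c := by
  induction h with
  | refl => exact refl
  | step _ hs ih => exact ih.step hs.reverse

theorem eDist_reverse (u v : List (α × ℝ)) :
    eDist wdel wins wsub u.reverse v.reverse = eDist wdel wins wsub u v := by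
  unfold eDist
  congr 1
  ext c
  exact ⟨fun h => by simpa using h.reverse, EditCost.reverse⟩

end EditDistance

end ExpStr

open ExpStr in
theorem eDist_cancel_general {α : Type*} [DecidableEq α]
    (wdel wins : α → ℝ) (wsub : α → α → ℝ)
    (hdel : ∀ a, 0 < wdel a) (hins : ∀ a, 0 < wins a)
    (hsub0 : ∀ a, wsub a a = 0)
    (htri₁ : ∀ a b c, wsub a c ≤ wsub a b + wsub b c)
    (htri₃ : ∀ a b, wins b ≤ wins a + wsub a b)
    (htri₄ : ∀ a b, wdel a ≤ wsub a b + wdel b)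
    (w u v : List (α × ℝ)) (hw : RES w) (hu : RES u) (hv : RES v) :
    eDist wdel wins wsub (rcat w u) (rcat w v) = eDist wdel wins wsub u v ∧
    eDist wdel wins wsub (rcat u w) (rcat v w) = eDist wdel wins wsub u v := by
  have hdel' : ∀ a, 0 ≤ wdel a := fun a => (hdel a).le
  have hins' : ∀ a, 0 ≤ wins a := fun a => (hins a).le
  refine ⟨eDist_rcat_left hdel' hins' hsub0 htri₁ htri₃ htri₄ hw hu hv, ?_⟩
  rw [← eDist_reverse, reverse_rcat, reverse_rcat,
    eDist_rcat_left hdel' hins' hsub0 htri₁ htri₃ htri₄ hw.reverse hu.reverse hv.reverse,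
    eDist_reverse]

open ExpStr in
/-- Exp-edit distance is invariant under common prefixes and common suffixes:
`dist(w·u, w·v) = dist(u,v)` and `dist(u·w, v·w) = dist(u,v)`. -/
theorem eDist_cancel {α : Type*} [DecidableEq α]
    (wdel wins : α → ℝ) (wsub : α → α → ℝ)
    (hdel : ∀ a, 0 < wdel a) (hins : ∀ a, 0 < wins a)
    (hsub0 : ∀ a, wsub a a = 0) (hsubpos : ∀ a b, a ≠ b → 0 < wsub a b)
    (htri₁ : ∀ a b c, wsub a c ≤ wsub a b + wsub b c)
    (htri₂ : ∀ a b, wsub a b ≤ wdel a + wins b)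
    (htri₃ : ∀ a b, wins b ≤ wins a + wsub a b)
    (htri₄ : ∀ a b, wdel a ≤ wsub a b + wdel b)
    (w u v : List (α × ℝ)) (hw : RES w) (hu : RES u) (hv : RES v) :
    eDist wdel wins wsub (rcat w u) (rcat w v) = eDist wdel wins wsub u v ∧
    eDist wdel wins wsub (rcat u w) (rcat v w) = eDist wdel wins wsub u v :=
  eDist_cancel_general wdel wins wsub hdel hins hsub0 htri₁ htri₃ htri₄ w u v hw hu hv
end
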